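/- arXiv:2205.15369 — 10 statements merged into one kernel-verified Lean document; each statement's English description precedes it below -/
import Mathlib

section
/- Let G be a finite nilpotent group of nilpotency class at most 2, let e = exp(G), e' = exp([G,G]) and f = exp(G/Z(G)). Then for every word w in the free group F_2 on two generators x, y there exist positive integers m and n with m dividing e, n dividing f and n ≤ e' such that w(G) equals the image of the word x^m[x,y^n] on G, where [x,y^n] = x y^n x^{-1} y^{-n}. -/
/-- The image of the word map on `G` induced by a word `w` in the free group
on `d` generators. -/
def wordImage {d : ℕ} (G : Type*) [Group G] (w : FreeGroup (Fin d)) : Set G :=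
  Set.range fun f : Fin d → G => FreeGroup.lift f w

/-- `A` is a word image impostor in `G`: it contains `1`, is invariant under all
automorphisms of `G`, and is not the image of any word map. -/
def IsWordImageImpostor (G : Type*) [Group G] (A : Set G) : Prop :=
  (1 : G) ∈ A ∧ (∀ (φ : G ≃* G), ∀ g ∈ A, φ g ∈ A) ∧
    ¬ ∃ (d : ℕ) (_ : 1 ≤ d) (w : FreeGroup (Fin d)), A = wordImage G w

/-- `G` is an extraspecial `p`-group: a `p`-group whose center, commutator subgroup
and Frattini subgroup coincide and have order `p`. -/
def IsExtraspecial (p : ℕ) (G : Type*) [Group G] : Prop :=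
  IsPGroup p G ∧ Subgroup.center G = commutator G ∧
    Subgroup.center G = frattini G ∧ Nat.card (Subgroup.center G) = p

open scoped commutatorElement

/-! In a group of nilpotency class at most two commutators are central and bimultiplicative,
so every word in `x, y` evaluates as `x ^ a * y ^ b * ⁅x, y⁆ ^ c`. The image of such a word is
unchanged by the substitutions `y ↦ y * x ^ t` and `x ↔ y`, which act on `(a, b)` as the steps of
Euclid's algorithm; this brings `b` to `0`. Then the exponent of `x` matters only modulo `exp G`
and that of `⁅x, y⁆` only modulo `exp (G ⧸ Z(G))`, because `⁅x, y ^ k⁆ = ⁅x, y⁆ ^ k`; substituting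
powers of `x` and `y` that are units modulo these exponents replaces `a` and `c` by divisors of
them. Finally `exp (G ⧸ Z(G))` divides `exp ⁅G, G⁆` because `⁅x ^ k, y⁆ = ⁅x, y⁆ ^ k`. -/

theorem Int.modEq_mul_mul_of_mul_modEq_one {n u v : ℤ} (huv : u * v ≡ 1 [ZMOD n]) (x : ℤ) :
    x ≡ v * (u * x) [ZMOD n] :=
  calc x = 1 * x := (one_mul x).symm
    _ ≡ u * v * x [ZMOD n] := (huv.mul_right x).symm
    _ = v * (u * x) := by ring

theorem exists_dvd_modEq_mul (A : ℤ) {N : ℕ} (hN : 0 < N) :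
    ∃ m : ℕ, 0 < m ∧ m ∣ N ∧ ∃ u v : ℤ, A ≡ u * m [ZMOD N] ∧ u * v ≡ 1 [ZMOD N] := by
  obtain ⟨m, hmN, u, ⟨u, rfl⟩, hA⟩ := ZMod.eq_unit_mul_divisor (A : ZMod N)
  refine ⟨m, Nat.pos_of_dvd_of_pos hmN hN, hmN, (u : ZMod N).cast,
    ((u⁻¹ : (ZMod N)ˣ) : ZMod N).cast, ?_, ?_⟩
  · rw [← ZMod.intCast_eq_intCast_iff]
    push_cast
    exact hA
  · rw [← ZMod.intCast_eq_intCast_iff]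
    push_cast
    exact u.mul_inv

def normalFormImage (G : Type*) [Group G] (a b c : ℤ) : Set G :=
  Set.range fun p : G × G => p.1 ^ a * p.2 ^ b * ⁅p.1, p.2⁆ ^ c

theorem wordImage_eq_range_of_lift_eq {G : Type*} [Group G] {w : FreeGroup (Fin 2)}
    {F : G → G → G} (h : ∀ f : Fin 2 → G, FreeGroup.lift f w = F (f 0) (f 1)) :
    wordImage G w = Set.range fun p : G × G => F p.1 p.2 := by
  ext x
  constructor
  · rintro ⟨f, rfl⟩
    exact ⟨(f 0, f 1), (h f).symm⟩
  · rintro ⟨⟨g, k⟩, rfl⟩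
    exact ⟨![g, k], by simp [h]⟩

theorem normalFormImage_congr_left {G : Type*} [Group G] {e : ℕ} (he : ∀ g : G, g ^ e = 1)
    {a a' : ℤ} (ha : a ≡ a' [ZMOD e]) (b c : ℤ) :
    normalFormImage G a b c = normalFormImage G a' b c := by
  unfold normalFormImage
  refine congrArg Set.range (funext fun p => ?_)
  rw [zpow_eq_zpow_emod' a (he p.1), ha.eq, ← zpow_eq_zpow_emod' a' (he p.1)]

theorem normalFormImage_congr_right {G : Type*} [Group G] {f : ℕ}
    (hf : ∀ g h : G, ⁅g, h⁆ ^ f = 1) (a b : ℤ) {c c' : ℤ} (hc : c ≡ c' [ZMOD f]) :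
    normalFormImage G a b c = normalFormImage G a b c' := by
  unfold normalFormImage
  refine congrArg Set.range (funext fun p => ?_)
  rw [zpow_eq_zpow_emod' c (hf p.1 p.2), hc.eq, ← zpow_eq_zpow_emod' c' (hf p.1 p.2)]

namespace ClassTwo

variable {G : Type*} [Group G] (hz : ∀ g h : G, ⁅g, h⁆ ∈ Subgroup.center G)
include hz

theorem commutatorElement_mul_comm (g h k : G) : ⁅g, h⁆ * k = k * ⁅g, h⁆ :=
  (Subgroup.mem_center_iff.mp (hz g h) k).symm

theorem commutatorElement_mul_right (g h₁ h₂ : G) : ⁅g, h₁ * h₂⁆ = ⁅g, h₁⁆ * ⁅g, h₂⁆ := by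
  rw [commutatorElement_mul_right_eq_mul_conj, mul_assoc _ h₁,
    ← commutatorElement_mul_comm hz g h₂ h₁]
  group

theorem commutatorElement_mul_left (g₁ g₂ h : G) : ⁅g₁ * g₂, h⁆ = ⁅g₁, h⁆ * ⁅g₂, h⁆ := by
  rw [commutatorElement_mul_left_eq_conj_mul, ← commutatorElement_mul_comm hz g₂ h g₁,
    mul_inv_cancel_right, commutatorElement_mul_comm hz]

theorem commutatorElement_zpow_right (g h : G) (n : ℤ) : ⁅g, h ^ n⁆ = ⁅g, h⁆ ^ n :=
  map_zpow (MonoidHom.mk' (⁅g, ·⁆) (commutatorElement_mul_right hz g)) h n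

theorem commutatorElement_zpow_left (g h : G) (n : ℤ) : ⁅g ^ n, h⁆ = ⁅g, h⁆ ^ n :=
  map_zpow (MonoidHom.mk' (⁅·, h⁆) fun g₁ g₂ => commutatorElement_mul_left hz g₁ g₂ h) g n

theorem commutatorElement_zpow_zpow (g h : G) (a b : ℤ) :
    ⁅g ^ a, h ^ b⁆ = ⁅g, h⁆ ^ (a * b) := by
  rw [commutatorElement_zpow_left hz, commutatorElement_zpow_right hz, ← zpow_mul, mul_comm]

theorem zpow_mul_zpow_comm (g h : G) (a b : ℤ) :
    h ^ b * g ^ a = g ^ a * h ^ b * ⁅g, h⁆ ^ (-(a * b)) := by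
  rw [zpow_neg, ← commutatorElement_zpow_zpow hz, commutatorElement_inv,
    ← commutatorElement_mul_comm hz, commutatorElement_def]
  group

theorem commutatorElement_zpow_mul_comm (g h k : G) (n : ℤ) :
    ⁅g, h⁆ ^ n * k = k * ⁅g, h⁆ ^ n := by
  rw [← commutatorElement_zpow_left hz, commutatorElement_mul_comm hz]

theorem normalForm_mul (g h : G) (a₁ b₁ c₁ a₂ b₂ c₂ : ℤ) :
    g ^ a₁ * h ^ b₁ * ⁅g, h⁆ ^ c₁ * (g ^ a₂ * h ^ b₂ * ⁅g, h⁆ ^ c₂) =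
      g ^ (a₁ + a₂) * h ^ (b₁ + b₂) * ⁅g, h⁆ ^ (c₁ + c₂ - b₁ * a₂) := by
  calc g ^ a₁ * h ^ b₁ * ⁅g, h⁆ ^ c₁ * (g ^ a₂ * h ^ b₂ * ⁅g, h⁆ ^ c₂)
      = g ^ a₁ * (h ^ b₁ * g ^ a₂) * h ^ b₂ * ⁅g, h⁆ ^ c₂ * ⁅g, h⁆ ^ c₁ := by
        rw [mul_assoc _ (⁅g, h⁆ ^ c₁), commutatorElement_zpow_mul_comm hz]; group
    _ = g ^ a₁ * g ^ a₂ * h ^ b₁ * (⁅g, h⁆ ^ (-(a₂ * b₁)) * h ^ b₂) * ⁅g, h⁆ ^ c₂ *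
          ⁅g, h⁆ ^ c₁ := by
        rw [zpow_mul_zpow_comm hz]; group
    _ = g ^ (a₁ + a₂) * h ^ (b₁ + b₂) * ⁅g, h⁆ ^ (c₁ + c₂ - b₁ * a₂) := by
        rw [commutatorElement_zpow_mul_comm hz]
        generalize ⁅g, h⁆ = z
        group

theorem exists_mul_zpow (n : ℤ) :
    ∃ k : ℤ, ∀ g h : G, (g * h) ^ n = g ^ n * h ^ n * ⁅g, h⁆ ^ k := by
  induction n using Int.induction_on with
  | zero => exact ⟨0, fun g h => by simp⟩
  | succ n ih =>
    obtain ⟨k, hk⟩ := ih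
    refine ⟨k - n, fun g h => ?_⟩
    rw [zpow_add_one, hk, show g * h = g ^ (1 : ℤ) * h ^ (1 : ℤ) * ⁅g, h⁆ ^ (0 : ℤ) by group,
      normalForm_mul hz]
    group
  | pred n ih =>
    obtain ⟨k, hk⟩ := ih
    refine ⟨k - n - 1, fun g h => ?_⟩
    rw [sub_eq_add_neg, zpow_add, hk,
      show (g * h) ^ (-1 : ℤ) = g ^ (-1 : ℤ) * h ^ (-1 : ℤ) * ⁅g, h⁆ ^ (-1 : ℤ) by group,
      normalForm_mul hz]
    group

theorem exists_lift_eq_normalForm (w : FreeGroup (Fin 2)) :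
    ∃ a b c : ℤ, ∀ f : Fin 2 → G, FreeGroup.lift f w = f 0 ^ a * f 1 ^ b * ⁅f 0, f 1⁆ ^ c := by
  induction w using FreeGroup.induction_on with
  | C1 => exact ⟨0, 0, 0, fun f => by simp⟩
  | of i =>
    refine ⟨if i = 0 then 1 else 0, if i = 0 then 0 else 1, 0, fun f => ?_⟩
    fin_cases i <;> simp
  | inv_of i _ =>
    refine ⟨if i = 0 then -1 else 0, if i = 0 then 0 else -1, 0, fun f => ?_⟩
    fin_cases i <;> simp
  | mul w₁ w₂ ih₁ ih₂ =>
    obtain ⟨a₁, b₁, c₁, h₁⟩ := ih₁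
    obtain ⟨a₂, b₂, c₂, h₂⟩ := ih₂
    exact ⟨_, _, _, fun f => by rw [map_mul, h₁, h₂, normalForm_mul hz]⟩

theorem wordImage_eq_normalFormImage (w : FreeGroup (Fin 2)) :
    ∃ a b c : ℤ, wordImage G w = normalFormImage G a b c := by
  obtain ⟨a, b, c, hw⟩ := exists_lift_eq_normalForm hz w
  exact ⟨a, b, c,
    wordImage_eq_range_of_lift_eq (F := fun g h => g ^ a * h ^ b * ⁅g, h⁆ ^ c) hw⟩

theorem normalFormImage_swap (a b c : ℤ) :
    normalFormImage G a b c = normalFormImage G b a (-(a * b) - c) := by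
  rw [normalFormImage, ← (Equiv.prodComm G G).surjective.range_comp]
  refine congrArg Set.range (funext fun ⟨g, h⟩ => ?_)
  simp only [Function.comp_apply, Equiv.prodComm_apply, Prod.swap_prod_mk]
  rw [zpow_mul_zpow_comm hz g h b a, ← commutatorElement_inv g h]
  generalize ⁅g, h⁆ = z
  group

theorem normalFormImage_shift (a b c t : ℤ) :
    ∃ c' : ℤ, normalFormImage G a b c = normalFormImage G (a + t * b) b c' := by
  obtain ⟨k, hk⟩ := exists_mul_zpow hz b
  refine ⟨c - t * k - t * b * b, ?_⟩
  rw [normalFormImage,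
    ← ((Equiv.refl G).prodShear fun g => Equiv.mulRight (g ^ t)).surjective.range_comp]
  refine congrArg Set.range (funext fun ⟨g, h⟩ => ?_)
  simp only [Function.comp_apply, Equiv.prodShear_apply, Equiv.refl_apply, Equiv.coe_mulRight]
  have h_comm : ⁅g, h * g ^ t⁆ = ⁅g, h⁆ := by
    rw [commutatorElement_mul_right hz, commutatorElement_zpow_right hz, commutatorElement_self,
      one_zpow, mul_one]
  have h_pow : (h * g ^ t) ^ b = h ^ b * g ^ (t * b) * ⁅g, h⁆ ^ (-(t * k)) := by
    rw [hk, ← zpow_mul, commutatorElement_zpow_right hz, ← commutatorElement_inv g h]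
    generalize ⁅g, h⁆ = z
    group
  rw [h_comm, h_pow, zpow_mul_zpow_comm hz g h (t * b) b]
  generalize ⁅g, h⁆ = z
  group

theorem exists_normalFormImage_eq_zero_middle (a b c : ℤ) :
    ∃ A C : ℤ, normalFormImage G a b c = normalFormImage G A 0 C := by
  induction h : b.natAbs using Nat.strong_induction_on generalizing a b c with
  | _ N ih =>
    obtain rfl | hb := eq_or_ne b 0
    · exact ⟨a, c, rfl⟩
    -- Euclid's algorithm: replace `(a, b)` by `(b, a % b)`.
    obtain ⟨c', hc'⟩ := normalFormImage_shift hz a b c (-(a / b))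
    have hmod : a + -(a / b) * b = a % b := by rw [Int.emod_def]; ring
    have hlt : (a % b).natAbs < N := by
      have := Int.emod_lt a hb
      have := Int.emod_nonneg a hb
      omega
    obtain ⟨A, C, hAC⟩ := ih _ hlt b (a % b) (-(a % b * b) - c') rfl
    exact ⟨A, C, by rw [hc', hmod, normalFormImage_swap hz, hAC]⟩

theorem normalFormImage_zpow_subset (x y a b c : ℤ) :
    normalFormImage G (x * a) (y * b) (x * y * c) ⊆ normalFormImage G a b c := by
  rintro _ ⟨⟨g, h⟩, rfl⟩
  refine ⟨(g ^ x, h ^ y), ?_⟩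
  simp only [commutatorElement_zpow_zpow hz, ← zpow_mul]

theorem normalFormImage_unit_mul_left {e : ℕ} (he : ∀ g : G, g ^ e = 1) {u v : ℤ}
    (huv : u * v ≡ 1 [ZMOD e]) (a c : ℤ) :
    normalFormImage G (u * a) 0 c = normalFormImage G a 0 (v * c) := by
  apply subset_antisymm
  · calc normalFormImage G (u * a) 0 c
        = normalFormImage G (u * a) (1 * 0) (u * 1 * (v * c)) := by
          rw [one_mul, mul_one, mul_left_comm]
          exact normalFormImage_congr_right (fun g h => he _) _ _
            (Int.modEq_mul_mul_of_mul_modEq_one huv c)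
      _ ⊆ _ := normalFormImage_zpow_subset hz u 1 a 0 (v * c)
  · calc normalFormImage G a 0 (v * c)
        = normalFormImage G (v * (u * a)) (1 * 0) (v * 1 * c) := by
          rw [one_mul, mul_one]
          exact normalFormImage_congr_left he (Int.modEq_mul_mul_of_mul_modEq_one huv a) _ _
      _ ⊆ _ := normalFormImage_zpow_subset hz v 1 (u * a) 0 c

theorem normalFormImage_unit_mul_right {f : ℕ} (hf : ∀ g h : G, ⁅g, h⁆ ^ f = 1) {u v : ℤ}
    (huv : u * v ≡ 1 [ZMOD f]) (a c : ℤ) :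
    normalFormImage G a 0 (u * c) = normalFormImage G a 0 c := by
  apply subset_antisymm
  · simpa using normalFormImage_zpow_subset hz 1 u a 0 c
  · calc normalFormImage G a 0 c
        = normalFormImage G (1 * a) (v * 0) (1 * v * (u * c)) := by
          rw [one_mul, mul_zero, one_mul]
          exact normalFormImage_congr_right hf _ _ (Int.modEq_mul_mul_of_mul_modEq_one huv c)
      _ ⊆ _ := normalFormImage_zpow_subset hz 1 v a 0 (u * c)

theorem commutatorElement_pow_exponent_quotient_center (g h : G) :
    ⁅g, h⁆ ^ Monoid.exponent (G ⧸ Subgroup.center G) = 1 := by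
  rw [← zpow_natCast, ← commutatorElement_zpow_right hz, zpow_natCast,
    commutatorElement_eq_one_iff_mul_comm]
  refine Subgroup.mem_center_iff.mp ?_ g
  rw [← QuotientGroup.eq_one_iff, QuotientGroup.mk_pow, Monoid.pow_exponent_eq_one]

theorem exponent_quotient_center_dvd_exponent_commutator :
    Monoid.exponent (G ⧸ Subgroup.center G) ∣ Monoid.exponent (commutator G) := by
  refine Monoid.exponent_dvd_of_forall_pow_eq_one fun x => ?_
  induction x using QuotientGroup.induction_on with
  | H g =>
    rw [← QuotientGroup.mk_pow, QuotientGroup.eq_one_iff, Subgroup.mem_center_iff]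
    intro k
    have h_comm : ⁅g ^ Monoid.exponent (commutator G), k⁆ = 1 := by
      rw [← zpow_natCast, commutatorElement_zpow_left hz, zpow_natCast]
      exact Subgroup.pow_exponent_eq_one (Subgroup.commutator_mem_commutator
        (Subgroup.mem_top g) (Subgroup.mem_top k))
    exact (commutatorElement_eq_one_iff_mul_comm.mp h_comm).symm

theorem wordImage_pow_mul_commutatorElement_pow (m n : ℕ) :
    wordImage G ((FreeGroup.of (0 : Fin 2)) ^ m *
      ⁅(FreeGroup.of (0 : Fin 2)), (FreeGroup.of (1 : Fin 2)) ^ n⁆) =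
      normalFormImage G m 0 n :=
  wordImage_eq_range_of_lift_eq (F := fun g h => g ^ (m : ℤ) * h ^ (0 : ℤ) * ⁅g, h⁆ ^ (n : ℤ))
    fun f => by
      simp [← commutatorElement_zpow_right hz]

end ClassTwo

open ClassTwo in
/-- For a finite nilpotent group of class at most 2, every word image in two variables
is the image of a word of the form x^m[x,y^n] with m ∣ exp(G), n ∣ exp(G/Z(G)),
n ≤ exp([G,G]). -/
theorem nilpotent_class_two_word_image (G : Type*) [Group G] [Finite G]
    (hG : commutator G ≤ Subgroup.center G) (w : FreeGroup (Fin 2)) :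
    ∃ m n : ℕ, 0 < m ∧ 0 < n ∧ m ∣ Monoid.exponent G ∧
      n ∣ Monoid.exponent (G ⧸ Subgroup.center G) ∧
      n ≤ Monoid.exponent (commutator G) ∧
      wordImage G w =
        wordImage G ((FreeGroup.of (0 : Fin 2)) ^ m *
          ⁅(FreeGroup.of (0 : Fin 2)), (FreeGroup.of (1 : Fin 2)) ^ n⁆) := by
  have hz : ∀ g h : G, ⁅g, h⁆ ∈ Subgroup.center G := fun g h =>
    hG (Subgroup.commutator_mem_commutator (Subgroup.mem_top g) (Subgroup.mem_top h))
  have he_pos : 0 < Monoid.exponent G := Monoid.ExponentExists.of_finite.exponent_pos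
  have hf_pos : 0 < Monoid.exponent (G ⧸ Subgroup.center G) :=
    Monoid.ExponentExists.of_finite.exponent_pos
  have he'_pos : 0 < Monoid.exponent (commutator G) :=
    Monoid.ExponentExists.of_finite.exponent_pos
  obtain ⟨a, b, c, hw⟩ := wordImage_eq_normalFormImage hz w
  obtain ⟨A, C, hAC⟩ := exists_normalFormImage_eq_zero_middle hz a b c
  obtain ⟨m, hm, hme, u, v, hAu, huv⟩ := exists_dvd_modEq_mul A he_pos
  obtain ⟨n, hn, hnf, u', v', hCu, huv'⟩ := exists_dvd_modEq_mul (v * C) hf_pos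
  refine ⟨m, n, hm, hn, hme, hnf, Nat.le_of_dvd he'_pos
    (hnf.trans (exponent_quotient_center_dvd_exponent_commutator hz)), ?_⟩
  rw [hw, hAC, wordImage_pow_mul_commutatorElement_pow hz,
    normalFormImage_congr_left Monoid.pow_exponent_eq_one hAu,
    normalFormImage_unit_mul_left hz Monoid.pow_exponent_eq_one huv,
    normalFormImage_congr_right (commutatorElement_pow_exponent_quotient_center hz) _ _ hCu,
    normalFormImage_unit_mul_right hz (commutatorElement_pow_exponent_quotient_center hz) huv']
end

section
/- Let p be a prime and G an extraspecial p-group. Then for every d ≥ 1 and every word w in the free group F_d, the word image w(G) is one of {1}, Z(G) or G; moreover each of {1}, Z(G) and G occurs as a word image of G. -/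
/-!
Because `Z(G) = [G, G]`, the group `G` has class two, so replacing the `i`-th argument `gᵢ` of a
word map by `gᵢ x` multiplies its value by `x ^ eᵢ * χ x`, where `eᵢ` is the exponent sum of `w` in
the `i`-th letter and `χ : G → Z(G)` is a homomorphism. If `p ∤ eᵢ`, putting `1` in all other
letters gives `w(G) ⊇ {g ^ eᵢ} = G`. Otherwise `x ^ eᵢ ∈ Φ(G) = Z(G)` for all `i`, hence
`w(G) ⊆ Z(G)`. Since `x ^ eᵢ * χ x` turns `x ^ k` into its `k`-th power, as soon as one change of
argument changes the value, these changes run through all of the cyclic group `Z(G)` of order `p`.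
The commutator word has image `Z(G)` because `G` is not abelian.
-/

open Subgroup

theorem IsPGroup.zpow_surjective {p : ℕ} [Fact p.Prime] {G : Type*} [Group G]
    (hG : IsPGroup p G) {e : ℤ} (he : ¬ (p : ℤ) ∣ e) : Function.Surjective (· ^ e : G → G) := by
  obtain ⟨n, rfl | rfl⟩ : ∃ n : ℕ, e = n ∨ e = -n := ⟨_, Int.natAbs_eq e⟩
  · have hn : ¬ p ∣ n := by exact_mod_cast he
    intro h
    obtain ⟨g, hg⟩ := (hG.powEquiv' hn).surjective h
    exact ⟨g, (zpow_natCast g n).trans hg⟩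
  · have hn : ¬ p ∣ n := by rwa [Int.dvd_neg, Int.natCast_dvd_natCast] at he
    intro h
    obtain ⟨g, hg⟩ := (hG.powEquiv' hn).surjective h⁻¹
    refine ⟨g, ?_⟩
    show g ^ (-(n : ℤ)) = h
    rw [zpow_neg, zpow_natCast, inv_eq_iff_eq_inv]
    exact hg

theorem IsPGroup.pow_mem_of_isCoatom {p : ℕ} [Fact p.Prime] {G : Type*} [Group G] [Finite G]
    (hG : IsPGroup p G) {M : Subgroup G} (hM : IsCoatom M) (g : G) : g ^ p ∈ M := by
  have : M.Normal := (Group.isNilpotent_of_finite_tfae.out 0 2 rfl rfl).mp hG.isNilpotent M hM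
  have : Nontrivial (G ⧸ M) := QuotientGroup.nontrivial_iff.mpr hM.1
  obtain ⟨n, hn, hcard⟩ := (hG.to_quotient M).nontrivial_iff_card.mp this
  obtain ⟨q, hq⟩ := exists_prime_orderOf_dvd_card' p (hcard ▸ dvd_pow_self p hn.ne')
  obtain ⟨q, rfl⟩ := QuotientGroup.mk_surjective q
  have hqM : q ∉ M := fun h => (Fact.out : p.Prime).ne_one <| by
    rw [← hq, (QuotientGroup.eq_one_iff q).mpr h, orderOf_one]
  -- The preimage of `⟨q⟩` properly contains the maximal subgroup `M`, so `G ⧸ M = ⟨q⟩`.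
  have htop : (zpowers (q : G ⧸ M)).comap (QuotientGroup.mk' M) = ⊤ := by
    refine hM.2 _ (lt_of_le_of_ne (fun m hm => ?_) fun h => hqM (h ▸ mem_zpowers _))
    simp [QuotientGroup.eq_one_iff m |>.mpr hm]
  have hg : g ∈ (zpowers (q : G ⧸ M)).comap (QuotientGroup.mk' M) := htop ▸ mem_top g
  obtain ⟨k, hk⟩ := mem_zpowers_iff.mp hg
  rw [← QuotientGroup.eq_one_iff, QuotientGroup.mk_pow, ← QuotientGroup.mk'_apply, ← hk,
    ← zpow_natCast, ← zpow_mul, mul_comm, zpow_mul, zpow_natCast, ← hq, pow_orderOf_eq_one,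
    one_zpow]

theorem IsPGroup.pow_mem_frattini {p : ℕ} [Fact p.Prime] {G : Type*} [Group G] [Finite G]
    (hG : IsPGroup p G) (g : G) : g ^ p ∈ frattini G := by
  simp only [frattini, Order.radical, Subgroup.mem_iInf]
  exact fun M hM => hG.pow_mem_of_isCoatom hM g

theorem Function.apply_eq_apply_of_forall_update {ι α β : Type*} [Finite ι] [DecidableEq ι]
    (F : (ι → α) → β) (hF : ∀ g i a, F (Function.update g i a) = F g) (f g : ι → α) :
    F f = F g := by
  have := Fintype.ofFinite ι
  have piecewise_eq : ∀ s : Finset ι, F (s.piecewise f g) = F g := by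
    intro s
    induction s using Finset.induction_on with
    | empty => rw [Finset.piecewise_empty]
    | insert i s _ ih => rw [Finset.piecewise_insert, hF, ih]
  simpa using piecewise_eq Finset.univ

namespace FreeGroup

variable {ι : Type*} {G : Type*} [Group G]

theorem lift_one_apply (w : FreeGroup ι) : lift (1 : ι → G) w = 1 :=
  DFunLike.congr_fun (ext_hom _ 1 fun _ => by simp) w

variable [DecidableEq ι]

def exponentSum (i : ι) : FreeGroup ι →* Multiplicative ℤ :=
  lift (Pi.mulSingle i (Multiplicative.ofAdd 1))

theorem lift_mulSingle (i : ι) (x : G) (w : FreeGroup ι) :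
    lift (Pi.mulSingle i x) w = x ^ (exponentSum i w).toAdd := by
  suffices lift (Pi.mulSingle i x) = (zpowersHom G x).comp (exponentSum i) from
    DFunLike.congr_fun this w
  refine ext_hom _ _ fun j => ?_
  by_cases hj : j = i
  · subst hj; simp [exponentSum]
  · simp [exponentSum, Pi.mulSingle_eq_of_ne hj]

end FreeGroup

open FreeGroup
open scoped commutatorElement

section WordImage

variable {G : Type*} [Group G]

theorem wordImage_one (d : ℕ) : wordImage G (1 : FreeGroup (Fin d)) = {1} := by
  ext
  simp [wordImage]

theorem wordImage_of {d : ℕ} (i : Fin d) : wordImage G (of i) = Set.univ :=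
  Set.eq_univ_of_forall fun g => ⟨fun _ => g, lift_apply_of⟩

theorem wordImage_commutator :
    wordImage G ⁅of (0 : Fin 2), of (1 : Fin 2)⁆ = {g | ∃ a b : G, ⁅a, b⁆ = g} := by
  ext g
  simp only [wordImage, map_commutatorElement, lift_apply_of, Set.mem_range]
  exact ⟨fun ⟨f, hf⟩ => ⟨f 0, f 1, hf⟩, fun ⟨a, b, hab⟩ => ⟨![a, b], hab⟩⟩

theorem wordImage_eq_univ_of_not_dvd {p : ℕ} [Fact p.Prime] {d : ℕ} (hG : IsPGroup p G)
    {w : FreeGroup (Fin d)} {i : Fin d} (hi : ¬ (p : ℤ) ∣ (exponentSum i w).toAdd) :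
    wordImage G w = Set.univ := by
  refine Set.eq_univ_of_forall fun h => ?_
  obtain ⟨g, rfl⟩ := hG.zpow_surjective hi h
  exact ⟨Pi.mulSingle i g, lift_mulSingle i g w⟩

end WordImage

open scoped IsMulCommutative

section ClassTwo

variable {G : Type*} [Group G] (hc : ∀ a b : G, ⁅a, b⁆ ∈ center G)

def commutatorElementHom (b : G) : G →* center G where
  toFun y := ⟨⁅b, y⁆, hc b y⟩
  map_one' := by ext; exact commutatorElement_one_right b
  map_mul' y z := by
    ext
    simp only [coe_mul]
    rw [commutatorElement_mul_right_eq_mul_conj, mul_assoc _ y, mem_center_iff.mp (hc b z) y,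
      ← mul_assoc, mul_inv_cancel_right]

include hc

theorem exists_lift_update_mul_eq {ι : Type*} [DecidableEq ι] (g : ι → G) (i : ι)
    (w : FreeGroup ι) : ∃ χ : G →* center G, ∀ x : G,
      lift (Function.update g i (g i * x)) w = lift g w * x ^ (exponentSum i w).toAdd * χ x := by
  induction w using FreeGroup.induction_on with
  | C1 => exact ⟨1, fun x => by simp⟩
  | of j =>
    refine ⟨1, fun x => ?_⟩
    by_cases hj : j = i
    · subst hj; simp [exponentSum]
    · simp [exponentSum, hj]
  | inv_of j _ =>
    by_cases hj : j = i
    · subst hj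
      refine ⟨(commutatorElementHom hc (g j))⁻¹, fun x => ?_⟩
      simp [exponentSum, commutatorElementHom, commutatorElement_def]
    · exact ⟨1, fun x => by simp [exponentSum, hj]⟩
  | mul u v ihu ihv =>
    obtain ⟨χu, hu⟩ := ihu
    obtain ⟨χv, hv⟩ := ihv
    set B := lift g v
    set a := (exponentSum i u).toAdd
    refine ⟨commutatorElementHom hc B⁻¹ ^ a * χu * χv, fun x => ?_⟩
    rw [_root_.map_mul, _root_.map_mul, hu x, hv x, _root_.map_mul, toAdd_mul,
      MonoidHom.mul_apply, MonoidHom.mul_apply, MonoidHom.zpow_apply, ← map_zpow, coe_mul, coe_mul]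
    set A := lift g u
    set b := (exponentSum i v).toAdd
    obtain ⟨cu, hcu⟩ := χu x
    obtain ⟨cv, hcv⟩ := χv x
    have hk : ⁅B⁻¹, x ^ a⁆ ∈ center G := hc _ _
    change A * x ^ a * cu * (B * x ^ b * cv) = A * B * x ^ (a + b) * (⁅B⁻¹, x ^ a⁆ * cu * cv)
    calc A * x ^ a * cu * (B * x ^ b * cv)
        = A * x ^ a * (cu * (B * x ^ b)) * cv := by simp only [mul_assoc]
      _ = A * B * (⁅B⁻¹, x ^ a⁆ * x ^ (a + b)) * cu * cv := by
          rw [← mem_center_iff.mp hcu, commutatorElement_def]; group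
      _ = A * B * x ^ (a + b) * (⁅B⁻¹, x ^ a⁆ * cu * cv) := by
          rw [← mem_center_iff.mp hk]; simp only [mul_assoc]

theorem lift_update_mul_zpow {ι : Type*} [DecidableEq ι] (g : ι → G) (i : ι) (w : FreeGroup ι)
    (x : G) (k : ℤ) :
    lift (Function.update g i (g i * x ^ k)) w =
      lift g w * ((lift g w)⁻¹ * lift (Function.update g i (g i * x)) w) ^ k := by
  obtain ⟨χ, hχ⟩ := exists_lift_update_mul_eq hc g i w
  have hcomm : Commute (x ^ (exponentSum i w).toAdd) (χ x) := mem_center_iff.mp (χ x).2 _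
  rw [hχ, hχ, mul_assoc (lift g w) _ (χ x : G), inv_mul_cancel_left, hcomm.mul_zpow, map_zpow,
    coe_zpow, ← zpow_mul, mul_comm k, zpow_mul, mul_assoc]

theorem wordImage_subset_center {d : ℕ} {w : FreeGroup (Fin d)}
    (hw : ∀ i (x : G), x ^ (exponentSum i w).toAdd ∈ center G) : wordImage G w ⊆ center G := by
  have hconst := Function.apply_eq_apply_of_forall_update
    (fun f : Fin d → G => (lift f w : G ⧸ center G)) fun g i y => by
      obtain ⟨χ, hχ⟩ := exists_lift_update_mul_eq hc g i w
      rw [← mul_inv_cancel_left (g i) y, hχ, eq_comm, QuotientGroup.eq, mul_assoc,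
        inv_mul_cancel_left]
      exact mul_mem (hw i _) (χ _).2
  rintro _ ⟨f, rfl⟩
  simpa [← QuotientGroup.eq_one_iff, lift_one_apply] using hconst f 1

theorem wordImage_eq_one_or_center (hZ : (Nat.card (center G)).Prime) {d : ℕ}
    {w : FreeGroup (Fin d)} (hw : wordImage G w ⊆ center G) :
    wordImage G w = {1} ∨ wordImage G w = center G := by
  by_cases hconst : ∀ (g : Fin d → G) i y, lift (Function.update g i y) w = lift g w
  · left
    ext v
    constructor
    · rintro ⟨f, rfl⟩
      simpa [lift_one_apply] using
        Function.apply_eq_apply_of_forall_update (fun f => lift f w) hconst f 1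
    · rintro rfl
      exact ⟨1, lift_one_apply w⟩
  · right
    push Not at hconst
    obtain ⟨g, i, y, hy⟩ := hconst
    refine hw.antisymm fun z hz => ?_
    set x := (g i)⁻¹ * y
    rw [← mul_inv_cancel_left (g i) y] at hy
    set D := (lift g w)⁻¹ * lift (Function.update g i (g i * x)) w
    have hD : D ∈ center G := mul_mem (inv_mem (hw ⟨g, rfl⟩)) (hw ⟨_, rfl⟩)
    have hD1 : (⟨D, hD⟩ : center G) ≠ 1 := by
      rwa [ne_eq, Subtype.ext_iff, coe_one, inv_mul_eq_one, eq_comm]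
    have := Fact.mk hZ
    obtain ⟨k, hk⟩ := mem_zpowers_iff.mp <| mem_zpowers_of_prime_card (G := center G) rfl hD1
      (g' := ⟨(lift g w)⁻¹ * z, mul_mem (inv_mem (hw ⟨g, rfl⟩)) hz⟩)
    refine ⟨Function.update g i (g i * x ^ k), (lift_update_mul_zpow hc g i w x k).trans ?_⟩
    rw [← mul_inv_cancel_left (lift g w) z]
    exact congrArg _ (congrArg Subtype.val hk)

end ClassTwo

namespace IsExtraspecial

variable {p : ℕ} {G : Type*} [Group G]

theorem commutatorElement_mem_center (hG : IsExtraspecial p G) (a b : G) : ⁅a, b⁆ ∈ center G :=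
  hG.2.1 ▸ commutator_mem_commutator (mem_top a) (mem_top b)

variable [Fact p.Prime]

theorem wordImage_eq_one_or_center_or_univ [Finite G] (hG : IsExtraspecial p G) {d : ℕ}
    (w : FreeGroup (Fin d)) :
    wordImage G w = {1} ∨ wordImage G w = center G ∨ wordImage G w = Set.univ := by
  have hc := hG.commutatorElement_mem_center
  obtain ⟨hpG, -, hZΦ, hcard⟩ := hG
  by_cases hdvd : ∀ i, (p : ℤ) ∣ (exponentSum i w).toAdd
  · have hsub := wordImage_subset_center hc fun i (x : G) => by
      obtain ⟨m, hm⟩ := hdvd i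
      rw [hm, zpow_mul, zpow_natCast, hZΦ]
      exact zpow_mem (hpG.pow_mem_frattini x) m
    exact (wordImage_eq_one_or_center hc (hcard ▸ Fact.out) hsub).imp_right Or.inl
  · push Not at hdvd
    obtain ⟨i, hi⟩ := hdvd
    exact Or.inr (Or.inr (wordImage_eq_univ_of_not_dvd hpG hi))

theorem wordImage_commutator_eq_center (hG : IsExtraspecial p G) :
    wordImage G ⁅of (0 : Fin 2), of (1 : Fin 2)⁆ = center G := by
  have hc := hG.commutatorElement_mem_center
  have hsub : wordImage G ⁅of (0 : Fin 2), of (1 : Fin 2)⁆ ⊆ center G := by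
    rw [wordImage_commutator]
    rintro _ ⟨a, b, rfl⟩
    exact hc a b
  refine (wordImage_eq_one_or_center hc (hG.2.2.2 ▸ Fact.out) hsub).resolve_left fun h => ?_
  have hcomm : commutator G = ⊥ := by
    rw [commutator_def, eq_bot_iff, commutator_le]
    intro a _ b _
    exact (h ▸ wordImage_commutator (G := G) ▸ ⟨a, b, rfl⟩ : ⁅a, b⁆ ∈ ({1} : Set G))
  have hp : p = 1 := by rw [← hG.2.2.2, hG.2.1, hcomm, card_bot]
  exact (Fact.out : p.Prime).ne_one hp

end IsExtraspecial

/-- In an extraspecial p-group the only word images are {1}, Z(G) and G,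
and each of these occurs as a word image. -/
theorem extraspecial_word_images {p : ℕ} (hp : p.Prime) (G : Type*) [Group G]
    [Finite G] (hG : IsExtraspecial p G) :
    (∀ (d : ℕ), 1 ≤ d → ∀ w : FreeGroup (Fin d),
        wordImage G w = {(1 : G)} ∨
        wordImage G w = (Subgroup.center G : Set G) ∨
        wordImage G w = (Set.univ : Set G)) ∧
    (∃ (d : ℕ) (_ : 1 ≤ d) (w : FreeGroup (Fin d)), wordImage G w = {(1 : G)}) ∧
    (∃ (d : ℕ) (_ : 1 ≤ d) (w : FreeGroup (Fin d)),
        wordImage G w = (Subgroup.center G : Set G)) ∧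
    (∃ (d : ℕ) (_ : 1 ≤ d) (w : FreeGroup (Fin d)),
        wordImage G w = (Set.univ : Set G)) := by
  have := Fact.mk hp
  exact ⟨fun d _ => hG.wordImage_eq_one_or_center_or_univ, ⟨1, le_rfl, 1, wordImage_one 1⟩,
    ⟨2, one_le_two, _, hG.wordImage_commutator_eq_center⟩, ⟨1, le_rfl, of 0, wordImage_of 0⟩⟩
end

section
/- Let G be an extraspecial 2-group and g, h ∈ G. Then there exists an automorphism of G mapping g to h if and only if g and h have the same order and (g ∈ Z(G) if and only if h ∈ Z(G)). -/
/-!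
Let `z` generate the center and write `⟪x, y⟫ : ZMod 2` for the exponent with
`⁅x, y⁆ = z ^ ⟪x, y⟫` (`commForm`). Since commutators are central, `⟪·, ·⟫` is a symmetric
bilinear form and squares are central, so `x ^ 2 ∈ {1, z}`. Automorphisms preserve order and
centrality. Conversely, central elements of equal order are equal, and noncentral `g`, `h` of
equal order satisfy `g ^ 2 = h ^ 2`. Automorphisms are built as `x ↦ x * s x` with `s` a crossed
homomorphism for conjugation. If `⟪g, h⟫ = 1`, then `a = g⁻¹ * h` has `a ^ 2 = z` and the
transvection `x ↦ x * a ^ ⟪x, a⟫` sends `g` to `h`. If `g` and `h` commute, pick `u` with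
`⟪g, u⟫ = ⟪h, u⟫ = 1` and `u ^ 2 ∈ {1, g ^ 2}`: when `u ^ 2 = g ^ 2`, two transvections pass
through `u`; when `u ^ 2 = 1`, the elements `a = g⁻¹ * h` and `u` are commuting involutions, and
the Siegel transformation `x ↦ x * a ^ ⟪x, u⟫ * u ^ ⟪x, a⟫ * z ^ (⟪x, a⟫ * ⟪x, u⟫)` sends `g`
to `h`.
-/

open scoped commutatorElement

lemma ZMod.eq_zero_or_eq_one (i : ZMod 2) : i = 0 ∨ i = 1 := by
  decide +revert

section PowVal

variable {M : Type*} [Monoid M]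

lemma pow_val_mul_pow_val (a : M) (i j : ZMod 2) :
    a ^ i.val * a ^ j.val = a ^ (i + j).val * (a ^ 2) ^ (i * j).val := by
  rcases i.eq_zero_or_eq_one with rfl | rfl <;> rcases j.eq_zero_or_eq_one with rfl | rfl <;>
    simp [sq, show (1 + 1 : ZMod 2) = 0 from rfl, ZMod.val_one]

lemma pow_val_add_of_sq_eq_one {a : M} (ha : a ^ 2 = 1) (i j : ZMod 2) :
    a ^ (i + j).val = a ^ i.val * a ^ j.val := by
  rw [pow_val_mul_pow_val, ha, one_pow, mul_one]

end PowVal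

section

variable {G : Type*} [Group G]

-- For an extraspecial 2-group this is the symplectic form of `G ⧸ Z(G)` over `ZMod 2`.
open scoped Classical in
noncomputable def commForm (x y : G) : ZMod 2 := if ⁅x, y⁆ = 1 then 0 else 1

section CommForm

variable {x y x' y' : G}

lemma commForm_eq_zero_iff : commForm x y = 0 ↔ Commute x y := by
  rw [← commutatorElement_eq_one_iff_commute, commForm]
  split_ifs with h <;> simp [h]

lemma commForm_eq_one_iff : commForm x y = 1 ↔ ¬Commute x y := by
  rw [← commForm_eq_zero_iff]
  rcases (commForm x y).eq_zero_or_eq_one with h | h <;> simp [h]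

lemma commForm_congr (h : Commute x y ↔ Commute x' y') : commForm x y = commForm x' y' := by
  by_cases hc : Commute x y
  · rw [commForm_eq_zero_iff.mpr hc, commForm_eq_zero_iff.mpr (h.mp hc)]
  · rw [commForm_eq_one_iff.mpr hc, commForm_eq_one_iff.mpr (h.not.mp hc)]

lemma commForm_comm (x y : G) : commForm x y = commForm y x :=
  commForm_congr Commute.symm_iff

lemma commForm_inv_left (x y : G) : commForm x⁻¹ y = commForm x y :=
  commForm_congr Commute.inv_left_iff

lemma commForm_inv_right (x y : G) : commForm x y⁻¹ = commForm x y :=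
  commForm_congr Commute.inv_right_iff

lemma commForm_self (x : G) : commForm x x = 0 :=
  commForm_eq_zero_iff.mpr (Commute.refl x)

lemma commForm_eq_zero_of_mem_center (hx : x ∈ Subgroup.center G) (y : G) : commForm x y = 0 :=
  commForm_eq_zero_iff.mpr (Subgroup.mem_center_iff.mp hx y).symm

lemma commForm_pow_val (x y : G) (i : ZMod 2) : commForm (x ^ i.val) y = i * commForm x y := by
  rcases i.eq_zero_or_eq_one with rfl | rfl
  · simp [commForm_eq_zero_of_mem_center (Subgroup.one_mem _)]
  · simp [ZMod.val_one]

lemma exists_commForm_eq_one_of_not_mem_center (hx : x ∉ Subgroup.center G) :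
    ∃ p, commForm x p = 1 := by
  simp_rw [commForm_eq_one_iff]
  by_contra! h
  exact hx (Subgroup.mem_center_iff.mpr fun p => (h p).eq.symm)

end CommForm

def IsConjCrossedHom (s : G → G) : Prop :=
  ∀ x y, s (x * y) = y⁻¹ * s x * y * s y

def mulShift (s : G → G) (hs : IsConjCrossedHom s) : G →* G where
  toFun x := x * s x
  map_one' := by simpa using hs 1 1
  map_mul' x y := by rw [hs]; group

lemma mulShift_apply (s : G → G) (hs : IsConjCrossedHom s) (x : G) :
    mulShift s hs x = x * s x :=
  rfl

lemma mulShift_comp_mulShift {s t : G → G} (hs : IsConjCrossedHom s)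
    (ht : IsConjCrossedHom t) (hts : ∀ x, t (x * s x) = (s x)⁻¹) :
    (mulShift t ht).comp (mulShift s hs) = MonoidHom.id G := by
  ext x
  simp [mulShift_apply, hts]

structure IsCommutatorInvolution (z : G) : Prop where
  mem_center : z ∈ Subgroup.center G
  ne_one : z ≠ 1
  sq_eq_one : z ^ 2 = 1
  commutatorElement_eq : ∀ x y : G, ⁅x, y⁆ = 1 ∨ ⁅x, y⁆ = z

namespace IsCommutatorInvolution

variable {z : G}

lemma commute_pow (hz : IsCommutatorInvolution z) (k : ℕ) (g : G) : Commute (z ^ k) g :=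
  (Subgroup.mem_center_iff.mp (Subgroup.pow_mem _ hz.mem_center k) g).symm

lemma pow_mul_pow_self (hz : IsCommutatorInvolution z) (k : ℕ) : z ^ k * z ^ k = 1 := by
  rw [← pow_add, ← two_mul, pow_mul, hz.sq_eq_one, one_pow]

lemma inv_eq_self (hz : IsCommutatorInvolution z) : z⁻¹ = z :=
  inv_eq_of_mul_eq_one_right (by simpa using hz.pow_mul_pow_self 1)

lemma pow_val_injective (hz : IsCommutatorInvolution z) :
    Function.Injective fun i : ZMod 2 => z ^ i.val := by
  intro i j hij
  rcases i.eq_zero_or_eq_one with rfl | rfl <;> rcases j.eq_zero_or_eq_one with rfl | rfl <;>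
    simp_all [ZMod.val_one, hz.ne_one, hz.ne_one.symm]

lemma commutatorElement_eq_pow (hz : IsCommutatorInvolution z) (x y : G) :
    ⁅x, y⁆ = z ^ (commForm x y).val := by
  rw [commForm]
  split_ifs with h
  · simp [h]
  · simp [ZMod.val_one, (hz.commutatorElement_eq x y).resolve_left h]

lemma commForm_mul_left (hz : IsCommutatorInvolution z) (x y w : G) :
    commForm (x * y) w = commForm x w + commForm y w := by
  apply hz.pow_val_injective
  simp only [pow_val_add_of_sq_eq_one hz.sq_eq_one, ← hz.commutatorElement_eq_pow]
  rw [commutatorElement_mul_left_eq_conj_mul, hz.commutatorElement_eq_pow y w,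
    ← (hz.commute_pow _ x).eq, mul_inv_cancel_right, (hz.commute_pow _ _).eq]

lemma commForm_mul_right (hz : IsCommutatorInvolution z) (x y w : G) :
    commForm x (y * w) = commForm x y + commForm x w := by
  rw [commForm_comm, hz.commForm_mul_left, commForm_comm y, commForm_comm w]

lemma inv_mul_mul_eq (hz : IsCommutatorInvolution z) (w y : G) :
    y⁻¹ * w * y = w * z ^ (commForm w y).val :=
  calc y⁻¹ * w * y = ⁅y⁻¹, w⁆ * w := by rw [commutatorElement_def]; group
    _ = w * ⁅y⁻¹, w⁆ := by rw [hz.commutatorElement_eq_pow, (hz.commute_pow _ w).eq]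
    _ = w * z ^ (commForm w y).val := by
      rw [hz.commutatorElement_eq_pow, commForm_inv_left, commForm_comm]

lemma mul_sq (hz : IsCommutatorInvolution z) (x y : G) :
    (x * y) ^ 2 = z ^ (commForm x y).val * (x ^ 2 * y ^ 2) :=
  calc (x * y) ^ 2 = x * x * (x⁻¹ * y * x) * y := by rw [sq]; group
    _ = x * x * y * (z ^ (commForm y x).val * y) := by rw [hz.inv_mul_mul_eq]; group
    _ = z ^ (commForm x y).val * (x ^ 2 * y ^ 2) := by
      rw [commForm_comm, (hz.commute_pow _ y).eq, ← mul_assoc, (hz.commute_pow _ _).symm.eq]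
      simp only [sq, mul_assoc]

lemma sq_mem_center (hz : IsCommutatorInvolution z) (x : G) : x ^ 2 ∈ Subgroup.center G := by
  refine Subgroup.mem_center_iff.mpr fun g => (commForm_eq_zero_iff.mp ?_).eq.symm
  rw [sq, hz.commForm_mul_left, CharTwo.add_self_eq_zero]

noncomputable def transvectionShift (a x : G) : G := a ^ (commForm x a).val

lemma isConjCrossedHom_transvectionShift (hz : IsCommutatorInvolution z) {a : G}
    (ha : a ^ 2 = z) : IsConjCrossedHom (transvectionShift a) := by
  intro x y
  simp only [transvectionShift]
  rw [hz.inv_mul_mul_eq, commForm_pow_val, hz.commForm_mul_left, commForm_comm a y,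
    mul_assoc, (hz.commute_pow _ _).eq, ← mul_assoc, pow_val_mul_pow_val, ha, mul_assoc,
    hz.pow_mul_pow_self, mul_one]

lemma transvectionShift_inv_mul_transvectionShift (hz : IsCommutatorInvolution z) (a x : G) :
    transvectionShift a⁻¹ (x * transvectionShift a x) = (transvectionShift a x)⁻¹ := by
  simp only [transvectionShift]
  rw [hz.commForm_mul_left, commForm_inv_right, commForm_inv_right, commForm_pow_val,
    commForm_self, mul_zero, add_zero, inv_pow]

noncomputable def transvection (hz : IsCommutatorInvolution z) {a : G} (ha : a ^ 2 = z) :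
    G ≃* G :=
  have ha' : a⁻¹ ^ 2 = z := by rw [inv_pow, ha, hz.inv_eq_self]
  (mulShift _ (hz.isConjCrossedHom_transvectionShift ha)).toMulEquiv
    (mulShift _ (hz.isConjCrossedHom_transvectionShift ha'))
    (mulShift_comp_mulShift _ _ (hz.transvectionShift_inv_mul_transvectionShift a))
    (mulShift_comp_mulShift _ _ fun x => by
      simpa only [inv_inv] using hz.transvectionShift_inv_mul_transvectionShift a⁻¹ x)

lemma transvection_apply (hz : IsCommutatorInvolution z) {a : G} (ha : a ^ 2 = z) (x : G) :
    hz.transvection ha x = x * a ^ (commForm x a).val :=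
  rfl

noncomputable def monomial (a b z : G) (i j k : ZMod 2) : G := a ^ i.val * b ^ j.val * z ^ k.val

lemma monomial_zero_zero (a b z : G) (k : ZMod 2) : monomial a b z 0 0 k = z ^ k.val := by
  simp [monomial]

lemma monomial_mul (hz : IsCommutatorInvolution z) {a b : G} (ha : a ^ 2 = 1) (hb : b ^ 2 = 1)
    (hab : Commute a b) (i j k i' j' k' : ZMod 2) :
    monomial a b z i j k * monomial a b z i' j' k' = monomial a b z (i + i') (j + j') (k + k') := by
  simp only [monomial, pow_val_add_of_sq_eq_one ha, pow_val_add_of_sq_eq_one hb,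
    pow_val_add_of_sq_eq_one hz.sq_eq_one]
  rw [(hz.commute_pow _ _).mul_mul_mul_comm, (hab.symm.pow_pow _ _).mul_mul_mul_comm]

lemma monomial_mul_self (hz : IsCommutatorInvolution z) {a b : G} (ha : a ^ 2 = 1)
    (hb : b ^ 2 = 1) (hab : Commute a b) (i j k : ZMod 2) :
    monomial a b z i j k * monomial a b z i j k = 1 := by
  rw [hz.monomial_mul ha hb hab]
  simp [CharTwo.add_self_eq_zero, monomial]

lemma commForm_monomial (hz : IsCommutatorInvolution z) (a b : G) (i j k : ZMod 2) (y : G) :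
    commForm (monomial a b z i j k) y = i * commForm a y + j * commForm b y := by
  simp only [monomial, hz.commForm_mul_left, commForm_pow_val,
    commForm_eq_zero_of_mem_center hz.mem_center, mul_zero, add_zero]

-- Lifts the Siegel transformation `x ↦ x + ⟪x, b⟫ a + ⟪x, a⟫ b` of `G ⧸ Z(G)` attached to the
-- totally singular pair `a`, `b`; the factor `z ^ (⟪x, a⟫ * ⟪x, b⟫)` makes it multiplicative.
noncomputable def siegelShift (z a b x : G) : G :=
  monomial a b z (commForm x b) (commForm x a) (commForm x a * commForm x b)

lemma isConjCrossedHom_siegelShift (hz : IsCommutatorInvolution z) {a b : G} (ha : a ^ 2 = 1)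
    (hb : b ^ 2 = 1) (hab : Commute a b) : IsConjCrossedHom (siegelShift z a b) := by
  intro x y
  simp only [siegelShift]
  rw [hz.inv_mul_mul_eq, hz.commForm_monomial, ← monomial_zero_zero a b,
    hz.monomial_mul ha hb hab, hz.monomial_mul ha hb hab, hz.commForm_mul_left x y a,
    hz.commForm_mul_left x y b, commForm_comm a y, commForm_comm b y]
  -- the `z`-exponents agree because `(α + α') (β + β') = α β + (β α' + α β') + α' β'`
  congr 1 <;> ring

lemma siegelShift_mul_siegelShift (hz : IsCommutatorInvolution z) {a b : G} (ha : a ^ 2 = 1)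
    (hb : b ^ 2 = 1) (hab : Commute a b) (x : G) :
    siegelShift z a b (x * siegelShift z a b x) = (siegelShift z a b x)⁻¹ := by
  have hca : commForm (siegelShift z a b x) a = 0 := by
    rw [siegelShift, hz.commForm_monomial, commForm_self, commForm_eq_zero_iff.mpr hab.symm]
    ring
  have hcb : commForm (siegelShift z a b x) b = 0 := by
    rw [siegelShift, hz.commForm_monomial, commForm_self, commForm_eq_zero_iff.mpr hab]
    ring
  rw [eq_inv_iff_mul_eq_one]
  conv_lhs => rw [siegelShift, hz.commForm_mul_left, hz.commForm_mul_left, hca, hcb]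
  simp only [add_zero]
  exact hz.monomial_mul_self ha hb hab _ _ _

noncomputable def siegel (hz : IsCommutatorInvolution z) {a b : G} (ha : a ^ 2 = 1)
    (hb : b ^ 2 = 1) (hab : Commute a b) : G ≃* G :=
  have h := mulShift_comp_mulShift _ _ (hz.siegelShift_mul_siegelShift ha hb hab)
  (mulShift _ (hz.isConjCrossedHom_siegelShift ha hb hab)).toMulEquiv _ h h

lemma siegel_apply (hz : IsCommutatorInvolution z) {a b : G} (ha : a ^ 2 = 1)
    (hb : b ^ 2 = 1) (hab : Commute a b) (x : G) :
    hz.siegel ha hb hab x =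
      x * monomial a b z (commForm x b) (commForm x a) (commForm x a * commForm x b) :=
  rfl

lemma exists_transvection_apply_eq (hz : IsCommutatorInvolution z) {g h : G}
    (hgh : commForm g h = 1) (hsq : g ^ 2 = h ^ 2) : ∃ φ : G ≃* G, φ g = h := by
  have ha : (g⁻¹ * h) ^ 2 = z := by
    rw [hz.mul_sq, commForm_inv_left, hgh, inv_pow, hsq, inv_mul_cancel,
      mul_one, ZMod.val_one, pow_one]
  have hga : commForm g (g⁻¹ * h) = 1 := by
    rw [hz.commForm_mul_right, commForm_inv_right, commForm_self, hgh, zero_add]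
  exact ⟨hz.transvection ha, by rw [transvection_apply, hga, ZMod.val_one, pow_one,
    mul_inv_cancel_left]⟩

lemma exists_siegel_apply_eq (hz : IsCommutatorInvolution z) {g h u : G}
    (hgh : commForm g h = 0) (hsq : g ^ 2 = h ^ 2) (hu : u ^ 2 = 1) (hgu : commForm g u = 1)
    (hhu : commForm h u = 1) : ∃ φ : G ≃* G, φ g = h := by
  have ha : (g⁻¹ * h) ^ 2 = 1 := by
    rw [hz.mul_sq, commForm_inv_left, hgh, inv_pow, hsq, inv_mul_cancel,
      mul_one, ZMod.val_zero, pow_zero]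
  have hau : Commute (g⁻¹ * h) u := by
    rw [← commForm_eq_zero_iff, hz.commForm_mul_left, commForm_inv_left, hgu, hhu,
      CharTwo.add_self_eq_zero]
  have hga : commForm g (g⁻¹ * h) = 0 := by
    rw [hz.commForm_mul_right, commForm_inv_right, commForm_self, hgh, zero_add]
  refine ⟨hz.siegel ha hu hau, ?_⟩
  rw [siegel_apply, hga, hgu, zero_mul]
  simp [monomial, ZMod.val_one]

lemma exists_anticommuting (hz : IsCommutatorInvolution z) {g h : G}
    (hg : g ∉ Subgroup.center G) (hh : h ∉ Subgroup.center G) :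
    ∃ u, commForm g u = 1 ∧ commForm h u = 1 := by
  obtain ⟨p, hp⟩ := exists_commForm_eq_one_of_not_mem_center hg
  obtain ⟨r, hr⟩ := exists_commForm_eq_one_of_not_mem_center hh
  rcases (commForm h p).eq_zero_or_eq_one with hhp | hhp
  · rcases (commForm g r).eq_zero_or_eq_one with hgr | hgr
    · refine ⟨p * r, ?_, ?_⟩ <;> simp [hz.commForm_mul_right, *]
    · exact ⟨r, hgr, hr⟩
  · exact ⟨p, hp, hhp⟩

lemma sq_eq_one_or_eq (hz : IsCommutatorInvolution z)
    (hZ : ∀ w ∈ Subgroup.center G, w = 1 ∨ w = z) (x : G) : x ^ 2 = 1 ∨ x ^ 2 = z :=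
  hZ _ (hz.sq_mem_center x)

lemma exists_anticommuting_sq_eq_one_or_eq_sq (hz : IsCommutatorInvolution z)
    (hZ : ∀ w ∈ Subgroup.center G, w = 1 ∨ w = z) {g h : G} (hg : g ∉ Subgroup.center G)
    (hh : h ∉ Subgroup.center G) (hgh : commForm g h = 0) :
    ∃ u, commForm g u = 1 ∧ commForm h u = 1 ∧ (u ^ 2 = 1 ∨ u ^ 2 = g ^ 2) := by
  obtain ⟨u, hgu, hhu⟩ := hz.exists_anticommuting hg hh
  rcases hz.sq_eq_one_or_eq hZ u with hu | hu
  · exact ⟨u, hgu, hhu, .inl hu⟩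
  rcases hz.sq_eq_one_or_eq hZ g with hg2 | hg2
  -- here `u ^ 2 = z` and `g ^ 2 = 1`, so `(u * g) ^ 2 = z * u ^ 2 * g ^ 2 = 1`
  · refine ⟨u * g, ?_, ?_, .inl ?_⟩
    · rw [hz.commForm_mul_right, hgu, commForm_self, add_zero]
    · rw [hz.commForm_mul_right, hhu, commForm_comm, hgh, add_zero]
    · rw [hz.mul_sq, commForm_comm, hgu, hu, hg2, mul_one, ZMod.val_one, pow_one, ← sq,
        hz.sq_eq_one]
  · exact ⟨u, hgu, hhu, .inr (hu.trans hg2.symm)⟩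

lemma exists_mulEquiv_apply_eq_of_not_mem_center (hz : IsCommutatorInvolution z)
    (hZ : ∀ w ∈ Subgroup.center G, w = 1 ∨ w = z) {g h : G} (hg : g ∉ Subgroup.center G)
    (hh : h ∉ Subgroup.center G) (hsq : g ^ 2 = h ^ 2) : ∃ φ : G ≃* G, φ g = h := by
  rcases (commForm g h).eq_zero_or_eq_one with hgh | hgh
  · obtain ⟨u, hgu, hhu, hu | hu⟩ := hz.exists_anticommuting_sq_eq_one_or_eq_sq hZ hg hh hgh
    · exact hz.exists_siegel_apply_eq hgh hsq hu hgu hhu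
    · obtain ⟨φ, hφ⟩ := hz.exists_transvection_apply_eq hgu hu.symm
      obtain ⟨ψ, hψ⟩ := hz.exists_transvection_apply_eq (by rwa [commForm_comm])
        (hu.trans hsq)
      exact ⟨φ.trans ψ, by rw [MulEquiv.trans_apply, hφ, hψ]⟩
  · exact hz.exists_transvection_apply_eq hgh hsq

end IsCommutatorInvolution

lemma eq_of_eq_one_iff {x y z : G} (hx : x = 1 ∨ x = z) (hy : y = 1 ∨ y = z)
    (hxy : x = 1 ↔ y = 1) : x = y := by
  by_cases h : x = 1
  · rw [h, hxy.mp h]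
  · rw [hx.resolve_left h, hy.resolve_left (hxy.not.mp h)]

lemma IsExtraspecial.exists_isCommutatorInvolution (hG : IsExtraspecial 2 G) :
    ∃ z : G, IsCommutatorInvolution z ∧ ∀ w ∈ Subgroup.center G, w = 1 ∨ w = z := by
  obtain ⟨-, hcomm, -, hcard⟩ := hG
  obtain ⟨z, hz1, hz⟩ := (Nat.card_eq_two_iff' (1 : Subgroup.center G)).mp hcard
  have hZ : ∀ w ∈ Subgroup.center G, w = 1 ∨ w = z := fun w hw => by
    by_cases h : (⟨w, hw⟩ : Subgroup.center G) = 1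
    · exact .inl (congrArg Subtype.val h)
    · exact .inr (congrArg Subtype.val (hz _ h))
  have hz1' : (z : G) ≠ 1 := by simpa using hz1
  refine ⟨z, ⟨z.2, hz1', ?_, fun x y => hZ _ ?_⟩, hZ⟩
  · refine (hZ _ (pow_mem z.2 2)).resolve_right fun h => hz1' ?_
    rwa [sq, mul_eq_right] at h
  · rw [hcomm, commutator_def]
    exact Subgroup.commutator_mem_commutator (Subgroup.mem_top x) (Subgroup.mem_top y)

end

theorem extraspecial_two_group_automorphic_iff_general (G : Type*) [Group G]
    (hG : IsExtraspecial 2 G) (g h : G) :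
    (∃ φ : G ≃* G, φ g = h) ↔
      (orderOf g = orderOf h ∧ (g ∈ Subgroup.center G ↔ h ∈ Subgroup.center G)) := by
  obtain ⟨z, hz, hZ⟩ := hG.exists_isCommutatorInvolution
  refine ⟨?_, fun ⟨hord, hcen⟩ => ?_⟩
  · rintro ⟨φ, rfl⟩
    exact ⟨(φ.orderOf_eq g).symm, (MulEquivClass.apply_mem_center_iff φ).symm⟩
  by_cases hg : g ∈ Subgroup.center G
  · refine ⟨MulEquiv.refl G, (eq_of_eq_one_iff (hZ g hg) (hZ h (hcen.mp hg)) ?_ : g = h)⟩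
    rw [← orderOf_eq_one_iff, hord, orderOf_eq_one_iff]
  · refine hz.exists_mulEquiv_apply_eq_of_not_mem_center hZ hg (hcen.not.mp hg)
      (eq_of_eq_one_iff (hz.sq_eq_one_or_eq hZ g) (hz.sq_eq_one_or_eq hZ h) ?_)
    rw [← orderOf_dvd_iff_pow_eq_one, hord, orderOf_dvd_iff_pow_eq_one]

/-- In an extraspecial 2-group, two elements are automorphic iff they have the same
order and are simultaneously central or noncentral. -/
theorem extraspecial_two_group_automorphic_iff (G : Type*) [Group G] [Finite G]
    (hG : IsExtraspecial 2 G) (g h : G) :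
    (∃ φ : G ≃* G, φ g = h) ↔
      (orderOf g = orderOf h ∧ (g ∈ Subgroup.center G ↔ h ∈ Subgroup.center G)) :=
  extraspecial_two_group_automorphic_iff_general G hG g h
end

section
/- Let p be an odd prime and G an extraspecial p-group of exponent p. Then two elements g, h ∈ G are automorphic (there exists an automorphism of G mapping g to h) if and only if g and h have the same order and (g ∈ Z(G) if and only if h ∈ Z(G)). -/
open scoped commutatorElement
open Subgroup

section

variable {p : ℕ} {G : Type*} [Group G]

def zmodPow (x : G) (k : ZMod p) : G := x ^ k.val

section zmodPow

@[simp] lemma zmodPow_zero (x : G) : zmodPow x (0 : ZMod p) = 1 := by simp [zmodPow]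

lemma zmodPow_one [Fact (1 < p)] (x : G) : zmodPow x (1 : ZMod p) = x := by
  simp [zmodPow, ZMod.val_one]

lemma zmodPow_mem_zpowers (x : G) (k : ZMod p) : zmodPow x k ∈ zpowers x :=
  npow_mem_zpowers x k.val

lemma map_zmodPow {H F : Type*} [Group H] [FunLike F G H] [MonoidHomClass F G H] (f : F) (x : G)
    (k : ZMod p) : f (zmodPow x k) = zmodPow (f x) k :=
  map_pow f x k.val

lemma coe_zmodPow {H : Subgroup G} (x : H) (k : ZMod p) :
    ((zmodPow x k : H) : G) = zmodPow (x : G) k :=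
  rfl

variable [NeZero p] {x : G}

lemma zmodPow_injective (hx : orderOf x = p) : Function.Injective (zmodPow x : ZMod p → G) := by
  intro a b hab
  rw [zmodPow, zmodPow, pow_eq_pow_iff_modEq, hx, ← ZMod.natCast_eq_natCast_iff] at hab
  simpa using hab

lemma zmodPow_eq_zpow (hx : x ^ p = 1) {k : ZMod p} {n : ℤ} (hn : (n : ZMod p) = k) :
    zmodPow x k = x ^ n := by
  rw [zmodPow, ← zpow_natCast, zpow_eq_zpow_iff_modEq]
  refine Int.ModEq.of_dvd (Int.natCast_dvd_natCast.mpr (orderOf_dvd_of_pow_eq_one hx)) ?_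
  rw [← ZMod.intCast_eq_intCast_iff, hn, Int.cast_natCast, ZMod.natCast_zmod_val]

lemma zmodPow_natCast (hx : x ^ p = 1) (n : ℕ) : zmodPow x (n : ZMod p) = x ^ n := by
  simpa using zmodPow_eq_zpow hx (n := n) rfl

lemma zmodPow_add (hx : x ^ p = 1) (a b : ZMod p) :
    zmodPow x (a + b) = zmodPow x a * zmodPow x b := by
  rw [zmodPow_eq_zpow hx (n := a.val + b.val) (by simp), zpow_add, zpow_natCast, zpow_natCast,
    zmodPow, zmodPow]

lemma zmodPow_neg (hx : x ^ p = 1) (a : ZMod p) : zmodPow x (-a) = (zmodPow x a)⁻¹ := by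
  rw [zmodPow_eq_zpow hx (n := -a.val) (by simp), zpow_neg, zpow_natCast, zmodPow]

lemma zmodPow_zmodPow (hx : x ^ p = 1) (a b : ZMod p) :
    zmodPow (zmodPow x a) b = zmodPow x (a * b) := by
  rw [zmodPow, zmodPow, ← pow_mul, ← zmodPow_natCast hx]
  simp

lemma mem_zpowers_iff_exists_zmodPow (hx : x ^ p = 1) {y : G} :
    y ∈ zpowers x ↔ ∃ k : ZMod p, zmodPow x k = y := by
  refine ⟨fun hy => ?_, fun ⟨k, hk⟩ => hk ▸ zmodPow_mem_zpowers x k⟩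
  obtain ⟨n, rfl⟩ := mem_zpowers_iff.mp hy
  exact ⟨n, zmodPow_eq_zpow hx rfl⟩

end zmodPow

theorem commutatorElement_mul_left_of_mem_center {x y z : G} (h : ⁅y, z⁆ ∈ center G) :
    ⁅x * y, z⁆ = ⁅x, z⁆ * ⁅y, z⁆ := by
  rw [commutatorElement_mul_left_eq_conj_mul, mul_assoc x, ← (mem_center_iff.mp h x⁻¹),
    mul_inv_cancel_left, (mem_center_iff.mp h _)]

theorem mul_mul_mul_mul_eq_of_commute {a b y a' b' y' : G} (hc : ⁅b, a'⁆ ∈ center G)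
    (ha : Commute y a') (hb : Commute y b') :
    a * b * y * (a' * b' * y') = a * a' * (b * b') * (⁅b, a'⁆ * (y * y')) := by
  have hy : y * (a' * b') = a' * b' * y := by
    rw [← mul_assoc, ha.eq, mul_assoc, hb.eq, mul_assoc]
  have hba : b * a' = ⁅b, a'⁆ * (a' * b) := by group
  calc a * b * y * (a' * b' * y') = a * (b * a') * b' * (y * y') := by
        rw [mul_assoc (a * b), ← mul_assoc y, hy]; group
    _ = a * a' * (b * b') * (⁅b, a'⁆ * (y * y')) := by
        rw [hba, ← mul_assoc a, mem_center_iff.mp hc a, ← mul_assoc (a * a' * (b * b')),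
          mem_center_iff.mp hc (a * a' * (b * b'))]
        group

theorem exists_mulEquiv_zmodPow_of_commute [Fact p.Prime] [Finite G]
    (hG : ∀ x y : G, Commute x y) (hp : ∀ x : G, x ^ p = 1) {t : ZMod p} (ht : t ≠ 0) :
    ∃ φ : G ≃* G, ∀ x, φ x = zmodPow x t := by
  let F : G →* G := MonoidHom.mk' (fun x => zmodPow x t) fun x y => (hG x y).mul_pow t.val
  have hF : Function.Injective F := by
    refine (injective_iff_map_eq_one F).mpr fun x hx => by_contra fun hx1 => ht ?_
    refine zmodPow_injective (orderOf_eq_prime (hp x) hx1) ?_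
    rw [zmodPow_zero]
    exact hx
  exact ⟨MulEquiv.ofBijective F (Finite.injective_iff_bijective.mp hF), fun _ => rfl⟩

/-- Besides extraspecial groups of exponent `p`, this class contains the centralisers met in the
induction of `exists_mulEquiv_apply_γ_eq`, whose centres may be larger than `zpowers γ`. -/
structure CyclicCommutators (p : ℕ) (G : Type*) [Group G] where
  γ : G
  γ_mem_center : γ ∈ center G
  γ_ne_one : γ ≠ 1
  pow_eq_one : ∀ x : G, x ^ p = 1
  commutator_mem : ∀ x y : G, ⁅x, y⁆ ∈ zpowers γ

namespace CyclicCommutators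

lemma zmodPow_γ_mem_center (c : CyclicCommutators p G) (k : ZMod p) :
    zmodPow c.γ k ∈ center G :=
  pow_mem c.γ_mem_center _

lemma commute_zmodPow_γ (c : CyclicCommutators p G) (k : ZMod p) (y : G) :
    Commute (zmodPow c.γ k) y :=
  (mem_center_iff.mp (c.zmodPow_γ_mem_center k) y).symm

lemma commutator_mem_center (c : CyclicCommutators p G) (x y : G) : ⁅x, y⁆ ∈ center G :=
  zpowers_le.mpr c.γ_mem_center (c.commutator_mem x y)

lemma γ_mem_centralizer (c : CyclicCommutators p G) (s : Set G) : c.γ ∈ centralizer s :=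
  center_le_centralizer s c.γ_mem_center

def restrict (c : CyclicCommutators p G) (H : Subgroup G) (hγ : c.γ ∈ H) :
    CyclicCommutators p H where
  γ := ⟨c.γ, hγ⟩
  γ_mem_center := mem_center_iff.mpr fun x => Subtype.ext (mem_center_iff.mp c.γ_mem_center x)
  γ_ne_one h := c.γ_ne_one (congrArg Subtype.val h)
  pow_eq_one x := Subtype.ext (c.pow_eq_one x)
  commutator_mem x y := by
    obtain ⟨k, hk⟩ := mem_zpowers_iff.mp (c.commutator_mem x y)
    exact mem_zpowers_iff.mpr ⟨k, Subtype.ext hk⟩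

variable [Fact p.Prime] (c : CyclicCommutators p G)

lemma orderOf_γ : orderOf c.γ = p := orderOf_eq_prime (c.pow_eq_one c.γ) c.γ_ne_one

noncomputable def B (x y : G) : ZMod p :=
  ((mem_zpowers_iff_exists_zmodPow (c.pow_eq_one c.γ)).mp (c.commutator_mem x y)).choose

lemma zmodPow_B (x y : G) : zmodPow c.γ (c.B x y) = ⁅x, y⁆ :=
  ((mem_zpowers_iff_exists_zmodPow (c.pow_eq_one c.γ)).mp (c.commutator_mem x y)).choose_spec

lemma B_eq_iff {x y : G} {k : ZMod p} : c.B x y = k ↔ zmodPow c.γ k = ⁅x, y⁆ :=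
  ⟨fun h => h ▸ c.zmodPow_B x y,
    fun h => zmodPow_injective c.orderOf_γ (c.zmodPow_B x y ▸ h.symm)⟩

lemma B_eq_zero_iff {x y : G} : c.B x y = 0 ↔ Commute x y := by
  rw [c.B_eq_iff, zmodPow_zero, eq_comm, commutatorElement_eq_one_iff_commute]

@[simp] lemma B_self (x : G) : c.B x x = 0 := c.B_eq_zero_iff.mpr (Commute.refl x)

@[simp] lemma B_one_left (x : G) : c.B 1 x = 0 := c.B_eq_zero_iff.mpr (Commute.one_left x)

@[simp] lemma B_one_right (x : G) : c.B x 1 = 0 := c.B_eq_zero_iff.mpr (Commute.one_right x)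

lemma B_mul_left (x y z : G) : c.B (x * y) z = c.B x z + c.B y z := by
  rw [c.B_eq_iff, zmodPow_add (c.pow_eq_one _), zmodPow_B, zmodPow_B,
    commutatorElement_mul_left_of_mem_center (c.commutator_mem_center y z)]

lemma B_swap (x y : G) : c.B y x = -c.B x y := by
  rw [c.B_eq_iff, zmodPow_neg (c.pow_eq_one _), zmodPow_B, commutatorElement_inv]

lemma B_mul_right (x y z : G) : c.B x (y * z) = c.B x y + c.B x z := by
  rw [c.B_swap, c.B_mul_left, neg_add, ← c.B_swap, ← c.B_swap]

lemma B_pow_left (x y : G) (n : ℕ) : c.B (x ^ n) y = n * c.B x y := by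
  induction n with
  | zero => simp
  | succ n ih => rw [pow_succ, B_mul_left, ih]; push_cast; ring

lemma B_zmodPow_left (x y : G) (k : ZMod p) : c.B (zmodPow x k) y = k * c.B x y := by
  rw [zmodPow, B_pow_left, ZMod.natCast_zmod_val]

lemma B_zmodPow_right (x y : G) (k : ZMod p) : c.B x (zmodPow y k) = k * c.B x y := by
  rw [c.B_swap, B_zmodPow_left, c.B_swap y, mul_neg]

lemma B_inv_left (x y : G) : c.B x⁻¹ y = -c.B x y := by
  have := c.B_mul_left x⁻¹ x y
  rw [inv_mul_cancel, B_one_left] at this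
  linear_combination -this

lemma B_inv_right (x y : G) : c.B x y⁻¹ = -c.B x y := by
  rw [c.B_swap, B_inv_left, c.B_swap y]

lemma B_eq_zero_of_mem_center_left {x : G} (hx : x ∈ center G) (y : G) : c.B x y = 0 :=
  c.B_eq_zero_iff.mpr (mem_center_iff.mp hx y).symm

lemma mem_center_iff_B {x : G} : x ∈ center G ↔ ∀ y, c.B y x = 0 := by
  simp only [B_eq_zero_iff, mem_center_iff, commute_iff_eq]

lemma exists_B_eq {u : G} (hu : u ∉ center G) (m : ZMod p) : ∃ x, c.B x u = m := by
  obtain ⟨x, hx⟩ := not_forall.mp (c.mem_center_iff_B.not.mp hu)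
  exact ⟨zmodPow x (m * (c.B x u)⁻¹),
    by rw [B_zmodPow_left, mul_assoc, inv_mul_cancel₀ hx, mul_one]⟩

section Transvection

variable (h2 : (2 : ZMod p) ≠ 0) (u : G) (l : ZMod p)

/-- Lift of the transvection `v ↦ v + l • B v u • u` of `G ⧸ zpowers γ`: the central factor
`γ ^ (-l * B x u ^ 2 / 2)` cancels the commutator created by moving powers of `u` past `y` in
`f x * f y`. -/
noncomputable def transvectionHom : G →* G :=
  MonoidHom.mk'
    (fun x => x * zmodPow u (l * c.B x u) * zmodPow c.γ (-(2⁻¹ * l) * c.B x u ^ 2)) fun x y => by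
    rw [mul_mul_mul_mul_eq_of_commute (c.commutator_mem_center _ _) (c.commute_zmodPow_γ _ _)
        (c.commute_zmodPow_γ _ _), ← c.zmodPow_B, ← zmodPow_add (c.pow_eq_one _),
      ← zmodPow_add (c.pow_eq_one _), ← zmodPow_add (c.pow_eq_one _), c.B_zmodPow_left,
      c.B_mul_left, c.B_swap y u]
    congr 2
    · rw [mul_add]
    · linear_combination (-(l * c.B x u * c.B y u)) * mul_inv_cancel₀ h2

lemma transvectionHom_apply (x : G) : c.transvectionHom h2 u l x =
    x * zmodPow u (l * c.B x u) * zmodPow c.γ (-(2⁻¹ * l) * c.B x u ^ 2) := rfl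

lemma B_transvectionHom_left (x : G) : c.B (c.transvectionHom h2 u l x) u = c.B x u := by
  rw [transvectionHom_apply, c.B_mul_left, c.B_mul_left, c.B_zmodPow_left, c.B_self,
    c.B_eq_zero_of_mem_center_left (c.zmodPow_γ_mem_center _), mul_zero, add_zero, add_zero]

lemma transvectionHom_neg_apply (x : G) :
    c.transvectionHom h2 u (-l) (c.transvectionHom h2 u l x) = x := by
  have hu : zmodPow u (-l * c.B x u) = (zmodPow u (l * c.B x u))⁻¹ := by
    rw [neg_mul, zmodPow_neg (c.pow_eq_one u)]
  have hγ : zmodPow c.γ (-(2⁻¹ * -l) * c.B x u ^ 2) =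
      (zmodPow c.γ (-(2⁻¹ * l) * c.B x u ^ 2))⁻¹ := by
    rw [← zmodPow_neg (c.pow_eq_one _)]; ring_nf
  rw [transvectionHom_apply (l := -l), B_transvectionHom_left, transvectionHom_apply, hu, hγ,
    mul_assoc (x * zmodPow u _), (c.commute_zmodPow_γ _ _).eq]
  group

noncomputable def transvection : G ≃* G :=
  (c.transvectionHom h2 u l).toMulEquiv (c.transvectionHom h2 u (-l))
    (MonoidHom.ext (c.transvectionHom_neg_apply h2 u l))
    (MonoidHom.ext fun x => by simpa using c.transvectionHom_neg_apply h2 u (-l) x)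

lemma transvection_apply (x : G) : c.transvection h2 u l x =
    x * zmodPow u (l * c.B x u) * zmodPow c.γ (-(2⁻¹ * l) * c.B x u ^ 2) := rfl

end Transvection

theorem exists_mulEquiv_apply_mul_eq_self {h z : G} (hh : h ∉ center G)
    (hz : z ∈ zpowers c.γ) : ∃ φ : G ≃* G, φ (h * z) = h := by
  obtain ⟨k, rfl⟩ := (mem_zpowers_iff_exists_zmodPow (c.pow_eq_one _)).mp hz
  obtain ⟨x, hx⟩ := c.exists_B_eq hh (-k)
  refine ⟨MulAut.conj x, ?_⟩
  calc MulAut.conj x (h * zmodPow c.γ k) = ⁅x, h⁆ * (h * zmodPow c.γ k) := by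
        rw [MulAut.conj_apply, ← mul_assoc, mul_assoc _ (zmodPow c.γ k),
          (c.commute_zmodPow_γ k x⁻¹).eq, commutatorElement_def]
        group
    _ = h := by
        rw [← c.zmodPow_B, hx, zmodPow_neg (c.pow_eq_one _), ← (c.commute_zmodPow_γ k h).eq]
        group

theorem exists_mulEquiv_apply_eq_of_B_ne_zero (h2 : (2 : ZMod p) ≠ 0) {g h : G}
    (hh : h ∉ center G) (hB : c.B g h ≠ 0) : ∃ φ : G ≃* G, φ g = h := by
  have hBg : c.B g (g⁻¹ * h) = c.B g h := by
    rw [c.B_mul_right, c.B_inv_right, c.B_self, neg_zero, zero_add]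
  obtain ⟨ψ, hψ⟩ := c.exists_mulEquiv_apply_mul_eq_self hh
    (zmodPow_mem_zpowers c.γ (-(2⁻¹ * (c.B g h)⁻¹) * c.B g h ^ 2))
  refine ⟨(c.transvection h2 (g⁻¹ * h) (c.B g h)⁻¹).trans ψ, ?_⟩
  rw [MulEquiv.trans_apply, transvection_apply, hBg, inv_mul_cancel₀ hB, zmodPow_one,
    mul_inv_cancel_left, hψ]

lemma exists_B_ne_zero_and_B_ne_zero {g h : G} (hg : g ∉ center G) (hh : h ∉ center G) :
    ∃ w, c.B g w ≠ 0 ∧ c.B w h ≠ 0 := by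
  obtain ⟨a, ha⟩ : ∃ a, c.B g a ≠ 0 := by
    obtain ⟨a, ha⟩ := not_forall.mp (c.mem_center_iff_B.not.mp hg)
    exact ⟨a, by rwa [c.B_swap, neg_ne_zero]⟩
  obtain ⟨b, hb⟩ := not_forall.mp (c.mem_center_iff_B.not.mp hh)
  by_cases hah : c.B a h = 0
  · by_cases hgb : c.B g b = 0
    · exact ⟨a * b, by rwa [c.B_mul_right, hgb, add_zero], by rwa [c.B_mul_left, hah, zero_add]⟩
    · exact ⟨b, hgb, hb⟩
  · exact ⟨a, ha, hah⟩

theorem exists_mulEquiv_apply_eq_of_notMem_center (c : CyclicCommutators p G)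
    (h2 : (2 : ZMod p) ≠ 0) {g h : G} (hg : g ∉ center G) (hh : h ∉ center G) :
    ∃ φ : G ≃* G, φ g = h := by
  obtain ⟨w, hgw, hwh⟩ := c.exists_B_ne_zero_and_B_ne_zero hg hh
  have hw : w ∉ center G := fun hw => hwh (c.B_eq_zero_of_mem_center_left hw h)
  obtain ⟨φ, hφ⟩ := c.exists_mulEquiv_apply_eq_of_B_ne_zero h2 hw hgw
  obtain ⟨ψ, hψ⟩ := c.exists_mulEquiv_apply_eq_of_B_ne_zero h2 hh hwh
  exact ⟨φ.trans ψ, by rw [MulEquiv.trans_apply, hφ, hψ]⟩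

lemma exists_B_eq_one (hG : ¬ ∀ x y : G, Commute x y) : ∃ a b, c.B a b = 1 := by
  simp only [not_forall] at hG
  obtain ⟨x, y, hxy⟩ := hG
  have hB : c.B x y ≠ 0 := c.B_eq_zero_iff.not.mpr hxy
  exact ⟨zmodPow x (c.B x y)⁻¹, y, by rw [B_zmodPow_left, inv_mul_cancel₀ hB]⟩

lemma mem_centralizer_pair_iff {a b y : G} :
    y ∈ centralizer {a, b} ↔ c.B y a = 0 ∧ c.B y b = 0 := by
  simp only [mem_centralizer_iff, Set.mem_insert_iff, Set.mem_singleton_iff, forall_eq_or_imp,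
    forall_eq, B_eq_zero_iff, commute_iff_eq]
  exact and_congr eq_comm eq_comm

lemma commute_zmodPow_of_mem_centralizer_pair (c : CyclicCommutators p G) {a b y : G}
    (hy : y ∈ centralizer {a, b}) (i j : ZMod p) :
    Commute y (zmodPow a i) ∧ Commute y (zmodPow b j) := by
  obtain ⟨ha, hb⟩ := c.mem_centralizer_pair_iff.mp hy
  exact ⟨(c.B_eq_zero_iff.mp ha).pow_right _, (c.B_eq_zero_iff.mp hb).pow_right _⟩

section HyperbolicPair

variable {a b : G}

noncomputable def centralizerPart (a b x : G) : G :=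
  (zmodPow a (c.B x b) * zmodPow b (c.B a x))⁻¹ * x

lemma zmodPow_mul_zmodPow_mul_centralizerPart (x : G) :
    zmodPow a (c.B x b) * zmodPow b (c.B a x) * c.centralizerPart a b x = x :=
  mul_inv_cancel_left _ x

lemma centralizerPart_mem (hab : c.B a b = 1) (x : G) :
    c.centralizerPart a b x ∈ centralizer {a, b} := by
  rw [c.mem_centralizer_pair_iff, centralizerPart]
  simp only [c.B_mul_left, c.B_inv_left, c.B_zmodPow_left, hab, c.B_self, c.B_swap a b,
    c.B_swap a x]
  constructor <;> ring

lemma commutatorElement_zmodPow_zmodPow (hab : c.B a b = 1) (i j : ZMod p) :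
    ⁅zmodPow b j, zmodPow a i⁆ = zmodPow c.γ (-(j * i)) := by
  rw [← c.zmodPow_B, c.B_zmodPow_left, c.B_zmodPow_right, c.B_swap a b, hab, mul_neg_one,
    mul_neg]

lemma centralizerPart_mul (hab : c.B a b = 1) (x x' : G) :
    c.centralizerPart a b (x * x') = zmodPow c.γ (-(c.B a x * c.B x' b)) *
      (c.centralizerPart a b x * c.centralizerPart a b x') := by
  obtain ⟨ha, hb⟩ := c.commute_zmodPow_of_mem_centralizer_pair (c.centralizerPart_mem hab x)
    (c.B x' b) (c.B a x')
  have key := congrArg₂ HMul.hMul (c.zmodPow_mul_zmodPow_mul_centralizerPart (a := a) (b := b) x)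
    (c.zmodPow_mul_zmodPow_mul_centralizerPart (a := a) (b := b) x')
  rw [mul_mul_mul_mul_eq_of_commute (c.commutator_mem_center _ _) ha hb,
    ← zmodPow_add (c.pow_eq_one a), ← zmodPow_add (c.pow_eq_one b), ← c.B_mul_left,
    ← c.B_mul_right, c.commutatorElement_zmodPow_zmodPow hab] at key
  rw [centralizerPart]
  conv_lhs => arg 2; rw [← key]
  exact inv_mul_cancel_left _ _

variable (hab : c.B a b = 1) (t : ZMod p) (ψ : centralizer {a, b} ≃* centralizer {a, b})
  (hψ : ψ (c.restrict _ (c.γ_mem_centralizer {a, b})).γ =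
    zmodPow (c.restrict _ (c.γ_mem_centralizer {a, b})).γ t)

/-- In the coordinates `x = a ^ i * b ^ j * d` with `d` in the centraliser of `a` and `b`, this is
`x ↦ a ^ (t * i) * b ^ j * ψ d`. -/
noncomputable def scaledHom : G →* G :=
  MonoidHom.mk' (fun x => zmodPow a (t * c.B x b) * zmodPow b (c.B a x) *
    ψ ⟨c.centralizerPart a b x, c.centralizerPart_mem hab x⟩) fun x x' => by
    set γD := (c.restrict _ (c.γ_mem_centralizer {a, b})).γ
    have hpart : (⟨c.centralizerPart a b (x * x'), c.centralizerPart_mem hab _⟩ :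
        centralizer {a, b}) = zmodPow γD (-(c.B a x * c.B x' b)) *
          (⟨_, c.centralizerPart_mem hab x⟩ * ⟨_, c.centralizerPart_mem hab x'⟩) :=
      Subtype.ext (c.centralizerPart_mul hab x x')
    obtain ⟨ha, hb⟩ := c.commute_zmodPow_of_mem_centralizer_pair
      (ψ ⟨_, c.centralizerPart_mem hab x⟩).2 (t * c.B x' b) (c.B a x')
    show _ = _
    rw [mul_mul_mul_mul_eq_of_commute (c.commutator_mem_center _ _) ha hb,
      c.commutatorElement_zmodPow_zmodPow hab, hpart, map_mul, map_mul, map_zmodPow, hψ,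
      zmodPow_zmodPow ((c.restrict _ (c.γ_mem_centralizer {a, b})).pow_eq_one _), c.B_mul_left,
      c.B_mul_right, mul_add, zmodPow_add (c.pow_eq_one a), zmodPow_add (c.pow_eq_one b)]
    simp only [coe_mul, coe_zmodPow]
    congr 3
    ring

lemma scaledHom_apply (x : G) : c.scaledHom hab t ψ hψ x = zmodPow a (t * c.B x b) *
    zmodPow b (c.B a x) * ψ ⟨c.centralizerPart a b x, c.centralizerPart_mem hab x⟩ := rfl

lemma B_scaledHom_left (x : G) : c.B (c.scaledHom hab t ψ hψ x) b = t * c.B x b := by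
  rw [scaledHom_apply, c.B_mul_left, c.B_mul_left, c.B_zmodPow_left, c.B_zmodPow_left, hab,
    c.B_self, (c.mem_centralizer_pair_iff.mp (ψ _).2).2]
  ring

lemma B_scaledHom_right (x : G) : c.B a (c.scaledHom hab t ψ hψ x) = c.B a x := by
  rw [scaledHom_apply, c.B_mul_right, c.B_mul_right, c.B_zmodPow_right, c.B_zmodPow_right, hab,
    c.B_self, c.B_swap (ψ ⟨c.centralizerPart a b x, c.centralizerPart_mem hab x⟩ : G) a,
    (c.mem_centralizer_pair_iff.mp (ψ _).2).1]
  ring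

lemma scaledHom_injective (ht : t ≠ 0) : Function.Injective (c.scaledHom hab t ψ hψ) := by
  refine (injective_iff_map_eq_one _).mpr fun x hx => ?_
  have hb : c.B x b = 0 := by
    refine (mul_eq_zero.mp ?_).resolve_left ht
    rw [← c.B_scaledHom_left hab t ψ hψ x, hx, B_one_left]
  have ha : c.B a x = 0 := by
    rw [← c.B_scaledHom_right hab t ψ hψ x, hx, B_one_right]
  rw [scaledHom_apply, hb, ha, mul_zero, zmodPow_zero, zmodPow_zero, one_mul, one_mul,
    OneMemClass.coe_eq_one, MulEquiv.map_eq_one_iff, Subgroup.mk_eq_one] at hx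
  rw [← c.zmodPow_mul_zmodPow_mul_centralizerPart (a := a) (b := b) x, hx, hb, ha]
  simp

lemma scaledHom_γ : c.scaledHom hab t ψ hψ c.γ = zmodPow c.γ t := by
  have ha : c.B a c.γ = 0 := by
    rw [c.B_swap, c.B_eq_zero_of_mem_center_left c.γ_mem_center, neg_zero]
  have hb : c.B c.γ b = 0 := c.B_eq_zero_of_mem_center_left c.γ_mem_center b
  have hpart : c.centralizerPart a b c.γ = c.γ := by simp [centralizerPart, ha, hb]
  rw [scaledHom_apply, ha, hb, mul_zero, zmodPow_zero, zmodPow_zero, one_mul, one_mul]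
  simp only [hpart]
  exact congrArg Subtype.val hψ

end HyperbolicPair

theorem exists_mulEquiv_apply_γ_eq [Finite G] (c : CyclicCommutators p G) {t : ZMod p}
    (ht : t ≠ 0) : ∃ φ : G ≃* G, φ c.γ = zmodPow c.γ t := by
  induction hn : Nat.card G using Nat.strong_induction_on generalizing G with
  | _ n ih =>
  by_cases hG : ∀ x y : G, Commute x y
  · obtain ⟨φ, hφ⟩ := exists_mulEquiv_zmodPow_of_commute hG c.pow_eq_one ht
    exact ⟨φ, hφ _⟩
  obtain ⟨a, b, hab⟩ := c.exists_B_eq_one hG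
  have ha : a ∉ centralizer {a, b} := fun ha => by
    simp [c.mem_centralizer_pair_iff, hab] at ha
  have hlt : Nat.card (centralizer {a, b}) < n := hn ▸ (card_le_card_group _).lt_of_ne
    fun h => ha (eq_top_of_card_eq _ h ▸ mem_top a)
  obtain ⟨ψ, hψ⟩ := ih _ hlt (c.restrict _ (c.γ_mem_centralizer {a, b})) rfl
  exact ⟨MulEquiv.ofBijective _ (Finite.injective_iff_bijective.mp
    (c.scaledHom_injective hab t ψ hψ ht)), c.scaledHom_γ hab t ψ hψ⟩

theorem exists_mulEquiv_apply_γ_eq_of_mem_zpowers [Finite G] (c : CyclicCommutators p G)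
    {h : G} (hh : h ∈ zpowers c.γ) (hh1 : h ≠ 1) : ∃ φ : G ≃* G, φ c.γ = h := by
  obtain ⟨k, rfl⟩ := (mem_zpowers_iff_exists_zmodPow (c.pow_eq_one _)).mp hh
  exact c.exists_mulEquiv_apply_γ_eq fun hk => hh1 (by rw [hk, zmodPow_zero])

end CyclicCommutators

namespace IsExtraspecial

variable [Fact p.Prime]

theorem exists_mem_center_ne_one (hG : IsExtraspecial p G) : ∃ γ ∈ center G, γ ≠ 1 :=
  (center G).bot_or_exists_ne_one.resolve_left fun h => (Fact.out : p.Prime).one_lt.ne' <| by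
    rw [← hG.2.2.2, h, card_bot]

theorem center_eq_zpowers (hG : IsExtraspecial p G) (hexp : Monoid.exponent G = p) {γ : G}
    (hγ : γ ∈ center G) (hγ1 : γ ≠ 1) : center G = zpowers γ := by
  have : Finite (center G) :=
    Nat.finite_of_card_ne_zero (hG.2.2.2 ▸ (Fact.out : p.Prime).ne_zero)
  refine (eq_of_le_of_card_ge (zpowers_le.mpr hγ) ?_).symm
  rw [Nat.card_zpowers, orderOf_eq_prime (hexp ▸ Monoid.pow_exponent_eq_one γ) hγ1, hG.2.2.2]

def toCyclicCommutators (hG : IsExtraspecial p G) (hexp : Monoid.exponent G = p) {γ : G}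
    (hγ : γ ∈ center G) (hγ1 : γ ≠ 1) : CyclicCommutators p G where
  γ := γ
  γ_mem_center := hγ
  γ_ne_one := hγ1
  pow_eq_one x := hexp ▸ Monoid.pow_exponent_eq_one x
  commutator_mem x y := by
    rw [← hG.center_eq_zpowers hexp hγ hγ1, hG.2.1]
    exact commutator_mem_commutator (mem_top x) (mem_top y)

end IsExtraspecial

end

/-- In an extraspecial p-group of exponent p (p odd), two elements are automorphic iff
they have the same order and are simultaneously central or noncentral. -/
theorem extraspecial_exp_p_automorphic_iff {p : ℕ} (hp : p.Prime) (hodd : Odd p)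
    (G : Type*) [Group G] [Finite G] (hG : IsExtraspecial p G)
    (hexp : Monoid.exponent G = p) (g h : G) :
    (∃ φ : G ≃* G, φ g = h) ↔
      (orderOf g = orderOf h ∧ (g ∈ Subgroup.center G ↔ h ∈ Subgroup.center G)) := by
  have : Fact p.Prime := ⟨hp⟩
  refine ⟨fun ⟨φ, hφ⟩ => hφ ▸ ⟨(φ.orderOf_eq g).symm,
    (MulEquivClass.apply_mem_center_iff φ).symm⟩, fun ⟨horder, hcenter⟩ => ?_⟩
  by_cases hg : g ∈ center G
  · by_cases hg1 : g = 1
    · refine ⟨MulEquiv.refl G, ?_⟩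
      rw [hg1, MulEquiv.refl_apply, eq_comm, ← orderOf_eq_one_iff, ← horder, hg1, orderOf_one]
    have hh1 : h ≠ 1 := fun hh1 => hg1 (orderOf_eq_one_iff.mp (by rw [horder, hh1, orderOf_one]))
    exact (hG.toCyclicCommutators hexp hg hg1).exists_mulEquiv_apply_γ_eq_of_mem_zpowers
      (hG.center_eq_zpowers hexp hg hg1 ▸ hcenter.mp hg) hh1
  · have h2 : (2 : ZMod p) ≠ 0 := fun h2 => by
      have hp2 : p ∣ 2 := (ZMod.natCast_eq_zero_iff 2 p).mp (by exact_mod_cast h2)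
      rw [(Nat.prime_dvd_prime_iff_eq hp Nat.prime_two).mp hp2] at hodd
      exact Nat.not_odd_iff_even.mpr even_two hodd
    obtain ⟨γ, hγ, hγ1⟩ := hG.exists_mem_center_ne_one
    exact (hG.toCyclicCommutators hexp hγ hγ1).exists_mulEquiv_apply_eq_of_notMem_center h2 hg
      (hcenter.not.mp hg)
end

section
/- Let p be an odd prime and G an extraspecial p-group of exponent p. Then the natural action of the automorphism group Aut(G) on G has exactly three orbits. -/
/-!
Automorphisms fix `1` and preserve the centre `Z`, which has order `p`, so `{1}`, `Z \ {1}` and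
`G \ Z` are unions of orbits; the point is that `Aut G` is transitive on each of them.

On `G \ Z`: if `x` and `y` do not commute, put `u = x⁻¹ y` and `N = C(u)`. Since `Z` has prime
order and `G` has exponent `p`, `N` is a normal subgroup complemented by `⟨x⟩` and by `⟨y⟩`, and
conjugation by `x` and by `y = x u` agree on `N`. So `N ⋊ ⟨x⟩ ≅ N ⋊ ⟨y⟩` yields an automorphism
fixing `N` pointwise and sending `x` to `y` (a symplectic transvection on `G / Z`). Two arbitrary
noncentral elements are linked through a third one commuting with neither of them, which exists
because a group is never the union of two proper subgroups.

On `Z \ {1}`: peeling off non-commuting pairs `x, y` and passing to `C(x) ∩ C(y)` (a symplectic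
basis of `G / Z`) gives `G = A ⋊ B` with `A` abelian and `Z ≤ A`. Then `a b ↦ aˡ b` is an
automorphism for `l` prime to `p`, and it maps `z ∈ Z` to `zˡ`.
-/

open Subgroup
open scoped commutatorElement Pointwise

section ClassTwo

variable {G : Type*} [Group G] (hG : commutator G ≤ center G)
include hG

theorem commutatorElement_mem_center (a b : G) : ⁅a, b⁆ ∈ center G :=
  hG <| commutator_def G ▸ commutator_mem_commutator (mem_top a) (mem_top b)

def commutatorLeftHom (u : G) : G →* G where
  toFun a := ⁅a, u⁆
  map_one' := commutatorElement_one_left u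
  map_mul' a b := by
    have hb := mem_center_iff.mp (commutatorElement_mem_center hG b u)
    rw [commutatorElement_mul_left_eq_conj_mul, hb a, mul_inv_cancel_right]
    exact (hb _).symm

theorem commutatorElement_mul_left_of_le_center (a b u : G) :
    ⁅a * b, u⁆ = ⁅a, u⁆ * ⁅b, u⁆ :=
  map_mul (commutatorLeftHom hG u) a b

theorem commutatorElement_zpow_left_of_le_center (a u : G) (k : ℤ) :
    ⁅a ^ k, u⁆ = ⁅a, u⁆ ^ k :=
  map_zpow (commutatorLeftHom hG u) a k

theorem normal_of_center_le {H : Subgroup G} (hH : center G ≤ H) : H.Normal :=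
  .of_commutator_le G (hG.trans hH)

end ClassTwo

section PrimeCenter

variable {G : Type*} [Group G] {p : ℕ} [hp : Fact p.Prime] (hZ : Nat.card (center G) = p)
include hZ

theorem orderOf_eq_of_mem_center {c : G} (hc : c ∈ center G) (hc1 : c ≠ 1) :
    orderOf c = p := by
  have := (center G).orderOf_dvd_natCard hc
  rw [hZ, Nat.dvd_prime hp.out, orderOf_eq_one_iff] at this
  exact this.resolve_left hc1

theorem zpowers_eq_center {c : G} (hc : c ∈ center G) (hc1 : c ≠ 1) :
    zpowers c = center G := by
  have : Finite (center G) := Nat.finite_of_card_ne_zero (hZ ▸ hp.out.ne_zero)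
  refine eq_of_le_of_card_ge (zpowers_le.mpr hc) ?_
  rw [Nat.card_zpowers, orderOf_eq_of_mem_center hZ hc hc1, hZ]

end PrimeCenter

section Group

variable {G : Type*} [Group G]

theorem mem_centralizer_singleton_iff_commutatorElement {g u : G} :
    g ∈ centralizer {u} ↔ ⁅g, u⁆ = 1 :=
  mem_centralizer_singleton_iff.trans commutatorElement_eq_one_iff_mul_comm.symm

theorem exists_notMem_of_ne_top {H K : Subgroup G} (hH : H ≠ ⊤) (hK : K ≠ ⊤) :
    ∃ g, g ∉ H ∧ g ∉ K := by
  obtain ⟨a, ha⟩ := not_forall.mp (mt (eq_top_iff' H).mpr hH)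
  obtain ⟨b, hb⟩ := not_forall.mp (mt (eq_top_iff' K).mpr hK)
  by_cases haK : a ∈ K
  · by_cases hbH : b ∈ H
    · exact ⟨a * b, fun h => ha ((H.mul_mem_cancel_right hbH).mp h),
        fun h => hb ((K.mul_mem_cancel_left haK).mp h)⟩
    · exact ⟨b, hbH, hb⟩
  · exact ⟨a, ha, haK⟩

theorem conj_zpow_eq_of_inv_mul_mem_centralizer {N : Subgroup G} [N.Normal] {x y : G}
    (hxy : x⁻¹ * y ∈ centralizer (N : Set G)) (k : ℤ) {n : G} (hn : n ∈ N) :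
    x ^ k * n * (x ^ k)⁻¹ = y ^ k * n * (y ^ k)⁻¹ := by
  have hc : (x ^ k)⁻¹ * y ^ k ∈ centralizer (N : Set G) := by
    rw [← QuotientGroup.eq, QuotientGroup.mk_zpow, QuotientGroup.mk_zpow, QuotientGroup.eq.mpr hxy]
  set c := (x ^ k)⁻¹ * y ^ k
  rw [show y ^ k = x ^ k * c by simp [c], mul_assoc (x ^ k) c, ← hc n hn]
  group

section ZPowers

variable {x y : G}

theorem mem_zpowers_mk_self (a : zpowers x) : a ∈ zpowers ⟨x, mem_zpowers x⟩ := by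
  obtain ⟨_, k, rfl⟩ := a
  exact ⟨k, Subtype.ext (by simp)⟩

noncomputable def zpowersMulEquiv (h : orderOf x = orderOf y) : zpowers x ≃* zpowers y :=
  mulEquivOfOrderOfEq mem_zpowers_mk_self mem_zpowers_mk_self (by rwa [orderOf_mk, orderOf_mk])

theorem zpowersMulEquiv_apply_zpow (h : orderOf x = orderOf y) (k : ℤ) :
    (zpowersMulEquiv h ⟨x ^ k, k, rfl⟩ : G) = y ^ k := by
  rw [show (⟨x ^ k, k, rfl⟩ : zpowers x) = ⟨x, mem_zpowers x⟩ ^ k from Subtype.ext (by simp),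
    map_zpow, zpowersMulEquiv, mulEquivOfOrderOfEq_apply_gen]
  simp

theorem coe_sup_zpowers {H : Subgroup G} (hH : H ≤ centralizer {x}) :
    ((H ⊔ zpowers x : Subgroup G) : Set G) = H * zpowers x := by
  refine coe_mul_of_left_le_normalizer_right H _ (hH.trans ?_)
  rw [← centralizer_closure, ← zpowers_eq_closure]
  exact centralizer_le_normalizer _

theorem sup_zpowers_le_centralizer {H : Subgroup G} (hH : H ≤ centralizer H)
    (hHx : H ≤ centralizer {x}) : H ⊔ zpowers x ≤ centralizer ↑(H ⊔ zpowers x) := by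
  intro g hg g' hg'
  rw [← SetLike.mem_coe, coe_sup_zpowers hHx] at hg
  rw [coe_sup_zpowers hHx] at hg'
  obtain ⟨a, ha, _, ⟨i, rfl⟩, rfl⟩ := hg
  obtain ⟨b, hb, _, ⟨j, rfl⟩, rfl⟩ := hg'
  have hax : Commute a x := mem_centralizer_singleton_iff.mp (hHx ha)
  have hbx : Commute b x := mem_centralizer_singleton_iff.mp (hHx hb)
  have hab : Commute b a := hH ha b hb
  exact ((hab.mul_right (hbx.zpow_right i)).mul_left
    ((hax.zpow_right j).symm.mul_right (Commute.zpow_zpow_self x j i))).eq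

theorem sup_zpowers_inf_le {H C : Subgroup G} (hHx : H ≤ centralizer {x}) (hHC : H ≤ C)
    (hCx : Disjoint C (zpowers x)) : (H ⊔ zpowers x) ⊓ C ≤ H := by
  intro g hg
  obtain ⟨hg, hgC⟩ := mem_inf.mp hg
  rw [← SetLike.mem_coe, coe_sup_zpowers hHx] at hg
  obtain ⟨a, ha, b, hb, rfl⟩ := hg
  dsimp only at hgC ⊢
  rwa [disjoint_def.mp hCx ((C.mul_mem_cancel_left (hHC ha)).mp hgC) hb, mul_one]

end ZPowers

theorem exists_mulEquiv_of_isComplement' {N H₁ H₂ : Subgroup G} [hN : N.Normal]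
    (h₁ : N.IsComplement' H₁) (h₂ : N.IsComplement' H₂) (fN : N ≃* N) (fH : H₁ ≃* H₂)
    (hcompat : ∀ (h : H₁) (n : N),
      (fN ⟨h * n * (h : G)⁻¹, hN.conj_mem n n.2 h⟩ : G) = fH h * fN n * (fH h : G)⁻¹) :
    ∃ φ : G ≃* G, (∀ n : N, φ n = fN n) ∧ ∀ h : H₁, φ h = fH h := by
  let e₁ := SemidirectProduct.mulEquivSubgroup h₁
  let e₂ := SemidirectProduct.mulEquivSubgroup h₂
  refine ⟨(e₁.symm.trans (SemidirectProduct.congr fN fH fun h => ?_)).trans e₂,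
    fun n => ?_, fun h => ?_⟩
  · ext n
    exact hcompat h n ▸ rfl
  · have : e₁.symm n = .inl n := e₁.symm_apply_eq.mpr (by simp [e₁])
    simp [this, e₂]
  · have : e₁.symm h = .inr h := e₁.symm_apply_eq.mpr (by simp [e₁])
    simp [this, e₂]

open scoped IsMulCommutative in
theorem exists_mulEquiv_pow_of_isComplement' [Finite G] {A B : Subgroup G} [A.Normal]
    [IsMulCommutative A] (hAB : A.IsComplement' B) {n l : ℕ} (hexp : ∀ a ∈ A, a ^ n = 1)
    (hl : l.Coprime n) : ∃ φ : G ≃* G, ∀ a ∈ A, φ a = a ^ l := by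
  have hinj : Function.Injective (powMonoidHom l : A →* A) := by
    refine (injective_iff_map_eq_one _).mpr fun a ha => ?_
    have : a ^ l.gcd n = 1 := pow_gcd_eq_one.mpr ⟨ha, Subtype.ext (hexp a a.2)⟩
    rwa [hl.gcd_eq_one, pow_one] at this
  obtain ⟨φ, hφ, -⟩ := exists_mulEquiv_of_isComplement' hAB hAB
    (MulEquiv.ofBijective _ (Finite.injective_iff_bijective.mp hinj)) (MulEquiv.refl B)
    fun b a => by simp [conj_pow]
  exact ⟨φ, fun a ha => by simpa using hφ ⟨a, ha⟩⟩

theorem card_orbitRel_quotient_mulAut_eq_three (hZ1 : ∃ z ∈ center G, z ≠ 1)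
    (hG : ∃ x, x ∉ center G)
    (hcenter : ∀ z ∈ center G, z ≠ 1 → ∀ w ∈ center G, w ≠ 1 → ∃ φ : G ≃* G, φ z = w)
    (hnoncenter : ∀ x ∉ center G, ∀ y ∉ center G, ∃ φ : G ≃* G, φ x = y) :
    Nat.card (MulAction.orbitRel.Quotient (MulAut G) G) = 3 := by
  classical
  let f : G → Fin 3 := fun g => if g = 1 then 0 else if g ∈ center G then 1 else 2
  have hf : ∀ a b, f a = f b ↔ (a = 1 ↔ b = 1) ∧ (a ∈ center G ↔ b ∈ center G) := by
    intro a b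
    simp only [f]
    split_ifs <;> simp_all [one_mem]
  have hrel : ∀ a b, MulAction.orbitRel (MulAut G) G a b ↔ Setoid.ker f a b := by
    intro a b
    rw [MulAction.orbitRel_apply, MulAction.mem_orbit_iff, Setoid.ker_def, hf]
    constructor
    · rintro ⟨φ, rfl⟩
      exact ⟨by simp [MulAut.smul_def], MulEquivClass.apply_mem_center_iff φ⟩
    · rintro ⟨h1, hZ⟩
      by_cases hb : b ∈ center G
      · by_cases hb1 : b = 1
        · exact ⟨1, by simp [hb1, h1.mpr hb1]⟩
        · exact hcenter b hb hb1 a (hZ.mpr hb) (mt h1.mp hb1)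
      · exact hnoncenter b hb a (mt hZ.mp hb)
  have hsurj : Function.Surjective f := by
    obtain ⟨z, hz, hz1⟩ := hZ1
    obtain ⟨x, hx⟩ := hG
    have hx1 : x ≠ 1 := by rintro rfl; exact hx (one_mem _)
    intro i
    fin_cases i
    · exact ⟨1, by simp [f]⟩
    · exact ⟨z, by simp [f, hz, hz1]⟩
    · exact ⟨x, by simp [f, hx, hx1]⟩
  rw [Nat.card_congr ((Quotient.congrRight hrel).trans
    (Setoid.quotientKerEquivOfSurjective f hsurj)), Nat.card_fin]

end Group

section ExponentP

variable {G : Type*} [Group G] {p : ℕ} [Fact p.Prime]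
  (hG : commutator G ≤ center G) (hZ : Nat.card (center G) = p) (hexp : ∀ g : G, g ^ p = 1)
include hG hZ hexp

theorem disjoint_centralizer_zpowers {x u : G} (hxu : ¬Commute x u) :
    Disjoint (centralizer {u}) (zpowers x) := by
  have hc : ⁅x, u⁆ ≠ 1 := mt commutatorElement_eq_one_iff_commute.mp hxu
  refine disjoint_def.mpr ?_
  rintro _ hk ⟨k, rfl⟩
  rw [mem_centralizer_singleton_iff_commutatorElement,
    commutatorElement_zpow_left_of_le_center hG, ← orderOf_dvd_iff_zpow_eq_one,
    orderOf_eq_of_mem_center hZ (commutatorElement_mem_center hG x u) hc] at hk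
  exact orderOf_dvd_iff_zpow_eq_one.mp
    ((Int.natCast_dvd_natCast.mpr (orderOf_dvd_of_pow_eq_one (hexp x))).trans hk)

omit hexp in
theorem exists_mem_centralizer_mul_zpow {x u : G} (hxu : ¬Commute x u) (g : G) :
    ∃ n ∈ centralizer {u}, ∃ k : ℤ, n * x ^ k = g := by
  have hc : ⁅x, u⁆ ≠ 1 := mt commutatorElement_eq_one_iff_commute.mp hxu
  obtain ⟨k, hk⟩ := mem_zpowers_iff.mp <| (zpowers_eq_center hZ
    (commutatorElement_mem_center hG x u) hc).ge (commutatorElement_mem_center hG g u)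
  refine ⟨g * x ^ (-k), ?_, k, by group⟩
  rw [mem_centralizer_singleton_iff_commutatorElement,
    commutatorElement_mul_left_of_le_center hG, commutatorElement_zpow_left_of_le_center hG,
    zpow_neg, ← hk, mul_inv_cancel]

theorem isComplement'_centralizer_zpowers {x u : G} (hxu : ¬Commute x u) :
    (centralizer {u}).IsComplement' (zpowers x) := by
  refine isComplement'_of_disjoint_and_mul_eq_univ
    (disjoint_centralizer_zpowers hG hZ hexp hxu) (Set.eq_univ_of_forall fun g => ?_)
  obtain ⟨n, hn, k, rfl⟩ := exists_mem_centralizer_mul_zpow hG hZ hxu g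
  exact Set.mul_mem_mul hn (zpow_mem (mem_zpowers x) k)

theorem exists_mulEquiv_apply_eq_of_not_commute {x y : G} (hxy : ¬Commute x y) :
    ∃ φ : G ≃* G, φ x = y := by
  set u := x⁻¹ * y
  have hxu : ¬Commute x u := fun h => hxy (by simpa [u] using (Commute.refl x).mul_right h)
  have hyu : ¬Commute y u := fun h =>
    hxy (by simpa [u] using (h.mul_right (Commute.refl y).inv_right).symm)
  have : (centralizer {u}).Normal := normal_of_center_le hG (center_le_centralizer _)
  have hu : x⁻¹ * y ∈ centralizer (centralizer {u} : Set G) :=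
    fun _ hn => mem_centralizer_singleton_iff.mp hn
  have hx1 : x ≠ 1 := by rintro rfl; exact hxy (Commute.one_left y)
  have hy1 : y ≠ 1 := by rintro rfl; exact hxy (Commute.one_right x)
  have hxy' : orderOf x = orderOf y := by
    rw [orderOf_eq_prime (hexp x) hx1, orderOf_eq_prime (hexp y) hy1]
  obtain ⟨φ, -, hφ⟩ := exists_mulEquiv_of_isComplement'
    (isComplement'_centralizer_zpowers hG hZ hexp hxu)
    (isComplement'_centralizer_zpowers hG hZ hexp hyu) (MulEquiv.refl _) (zpowersMulEquiv hxy')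
    fun ⟨_, k, rfl⟩ n => by
      rw [zpowersMulEquiv_apply_zpow]
      exact conj_zpow_eq_of_inv_mul_mem_centralizer hu k n.2
  exact ⟨φ, by simpa using (hφ ⟨x ^ (1 : ℤ), 1, rfl⟩).trans (zpowersMulEquiv_apply_zpow hxy' 1)⟩

theorem exists_mulEquiv_apply_eq_of_notMem_center {x y : G} (hx : x ∉ center G)
    (hy : y ∉ center G) : ∃ φ : G ≃* G, φ x = y := by
  have hC : ∀ {g : G}, g ∉ center G → centralizer {g} ≠ ⊤ := fun hg h =>
    hg (mem_center_iff.mpr fun k => mem_centralizer_singleton_iff.mp (h ▸ mem_top k))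
  obtain ⟨w, hxw, hyw⟩ := exists_notMem_of_ne_top (hC hx) (hC hy)
  obtain ⟨φ, rfl⟩ := exists_mulEquiv_apply_eq_of_not_commute hG hZ hexp (x := x)
    fun h => hxw (mem_centralizer_singleton_iff.mpr h.symm.eq)
  obtain ⟨ψ, rfl⟩ := exists_mulEquiv_apply_eq_of_not_commute hG hZ hexp (y := y)
    fun h => hyw (mem_centralizer_singleton_iff.mpr h.eq)
  exact ⟨φ.trans ψ, rfl⟩

theorem disjoint_sup_zpowers {A B : Subgroup G} {x y : G} (hxy : ¬Commute x y)
    (hA : A ≤ centralizer {x} ⊓ centralizer {y}) (hB : B ≤ centralizer {x} ⊓ centralizer {y})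
    (hAB : Disjoint A B) : Disjoint (A ⊔ zpowers x) (B ⊔ zpowers y) := by
  have hx : x ∈ centralizer {x} := mem_centralizer_singleton_iff.mpr rfl
  have hy : y ∈ centralizer {y} := mem_centralizer_singleton_iff.mpr rfl
  refine disjoint_def.mpr fun hgA hgB => disjoint_def.mp hAB ?_ ?_
  · exact sup_zpowers_inf_le (hA.trans inf_le_left) (hA.trans inf_le_right)
      (disjoint_centralizer_zpowers hG hZ hexp hxy)
      ⟨hgA, sup_le (hB.trans inf_le_right) (zpowers_le.mpr hy) hgB⟩
  · exact sup_zpowers_inf_le (hB.trans inf_le_right) (hB.trans inf_le_left)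
      (disjoint_centralizer_zpowers hG hZ hexp fun h => hxy h.symm)
      ⟨hgB, sup_le (hA.trans inf_le_left) (zpowers_le.mpr hx) hgA⟩

omit hexp in
theorem subset_sup_zpowers_mul {K A B : Subgroup G} {x y : G} (hxK : x ∈ K) (hyK : y ∈ K)
    (hxy : ¬Commute x y) (hB : B ≤ centralizer {x})
    (hK : ((K ⊓ centralizer {x} ⊓ centralizer {y} : Subgroup G) : Set G) ⊆ A * B) :
    (K : Set G) ⊆ (A ⊔ zpowers x : Subgroup G) * (B ⊔ zpowers y : Subgroup G) := by
  intro g hg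
  obtain ⟨n, hn, j, rfl⟩ := exists_mem_centralizer_mul_zpow hG hZ (fun h => hxy h.symm) g
  obtain ⟨m, hm, i, rfl⟩ := exists_mem_centralizer_mul_zpow hG hZ hxy n
  have hmx : m ∈ centralizer {x} :=
    (mul_mem_cancel_right (zpow_mem (mem_centralizer_singleton_iff.mpr rfl) i)).mp hn
  have hmK : m ∈ K := (K.mul_mem_cancel_right (zpow_mem hxK i)).mp
    ((K.mul_mem_cancel_right (zpow_mem hyK j)).mp hg)
  obtain ⟨a, ha, b, hb, rfl⟩ := hK ⟨⟨hmK, hmx⟩, hm⟩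
  refine ⟨a * x ^ i, mul_mem (mem_sup_left ha) (mem_sup_right (zpow_mem (mem_zpowers x) i)),
    b * y ^ j, mul_mem (mem_sup_left hb) (mem_sup_right (zpow_mem (mem_zpowers y) j)), ?_⟩
  have hbx : Commute b (x ^ i) := Commute.zpow_right (mem_centralizer_singleton_iff.mp (hB hb)) i
  simp only [mul_assoc, hbx.eq]

theorem exists_abelian_splitting [Finite G] (K : Subgroup G) (hK : center G ≤ K) :
    ∃ A B : Subgroup G, A ≤ K ∧ B ≤ K ∧ A ≤ centralizer A ∧ center G ≤ A ∧ Disjoint A B ∧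
      (K : Set G) ⊆ A * B := by
  induction K using WellFoundedLT.induction with | _ K ih =>
  by_cases hKab : K ≤ centralizer K
  · exact ⟨K, ⊥, le_rfl, bot_le, hKab, hK, disjoint_bot_right,
      fun g hg => ⟨g, hg, 1, one_mem _, mul_one g⟩⟩
  obtain ⟨y, hyK, hy⟩ := SetLike.not_le_iff_exists.mp hKab
  obtain ⟨x, hxK, hxy⟩ : ∃ x ∈ K, ¬Commute x y := by
    simpa [mem_centralizer_iff, Commute, SemiconjBy] using hy
  have hlt : K ⊓ centralizer {x} ⊓ centralizer {y} < K :=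
    SetLike.lt_iff_le_and_exists.mpr ⟨inf_le_left.trans inf_le_left,
      y, hyK, fun h => hxy (mem_centralizer_singleton_iff.mp h.1.2).symm⟩
  obtain ⟨A, B, hAK, hBK, hA, hZA, hAB, hKAB⟩ := ih _ hlt
    (le_inf (le_inf hK (center_le_centralizer _)) (center_le_centralizer _))
  have hxy_le : K ⊓ centralizer {x} ⊓ centralizer {y} ≤ centralizer {x} ⊓ centralizer {y} :=
    inf_le_inf_right _ inf_le_right
  refine ⟨A ⊔ zpowers x, B ⊔ zpowers y,
    sup_le (hAK.trans (inf_le_left.trans inf_le_left)) (zpowers_le.mpr hxK),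
    sup_le (hBK.trans (inf_le_left.trans inf_le_left)) (zpowers_le.mpr hyK),
    sup_zpowers_le_centralizer hA (hAK.trans (hxy_le.trans inf_le_left)),
    le_sup_of_le_left hZA,
    disjoint_sup_zpowers hG hZ hexp hxy (hAK.trans hxy_le) (hBK.trans hxy_le) hAB,
    subset_sup_zpowers_mul hG hZ hxK hyK hxy (hBK.trans (hxy_le.trans inf_le_left)) hKAB⟩

theorem exists_mulEquiv_apply_eq_of_mem_center [Finite G] {z w : G} (hz : z ∈ center G)
    (hz1 : z ≠ 1) (hw : w ∈ center G) (hw1 : w ≠ 1) : ∃ φ : G ≃* G, φ z = w := by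
  obtain ⟨A, B, -, -, hA, hZA, hAB, hGAB⟩ := exists_abelian_splitting hG hZ hexp ⊤ le_top
  have : A.Normal := normal_of_center_le hG hZA
  have : IsMulCommutative A := le_centralizer_iff_isMulCommutative.mp hA
  obtain ⟨l, rfl⟩ : ∃ l : ℕ, z ^ l = w :=
    mem_powers_iff_mem_zpowers.mpr ((zpowers_eq_center hZ hz hz1).ge hw)
  have hl : l.Coprime p := Nat.coprime_comm.mp <| (Nat.Prime.coprime_iff_not_dvd Fact.out).mpr
    fun hpl => hw1 (orderOf_dvd_iff_pow_eq_one.mp (orderOf_eq_of_mem_center hZ hz hz1 ▸ hpl))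
  obtain ⟨φ, hφ⟩ := exists_mulEquiv_pow_of_isComplement'
    (isComplement'_of_disjoint_and_mul_eq_univ hAB (Set.univ_subset_iff.mp hGAB))
    (fun a _ => hexp a) hl
  exact ⟨φ, hφ z (hZA hz)⟩

end ExponentP

theorem extraspecial_exp_p_orbit_count_general {p : ℕ} (hp : p.Prime)
    (G : Type*) [Group G] [Finite G] (hG : IsExtraspecial p G)
    (hexp : Monoid.exponent G = p) :
    Nat.card (MulAction.orbitRel.Quotient (MulAut G) G) = 3 := by
  obtain ⟨-, hZG', -, hZ⟩ := hG
  have : Fact p.Prime := ⟨hp⟩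
  have hG' : commutator G ≤ center G := hZG'.ge
  have hpow : ∀ g : G, g ^ p = 1 := hexp ▸ Monoid.pow_exponent_eq_one
  have hZbot : center G ≠ ⊥ := fun h => hp.one_lt.ne' (by rw [← hZ, h, card_bot])
  refine card_orbitRel_quotient_mulAut_eq_three ((bot_or_exists_ne_one _).resolve_left hZbot)
    ?_ (fun _ hz hz1 _ hw hw1 => exists_mulEquiv_apply_eq_of_mem_center hG' hZ hpow hz hz1 hw hw1)
    (fun _ hx _ hy => exists_mulEquiv_apply_eq_of_notMem_center hG' hZ hpow hx hy)
  by_contra! hab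
  exact hZbot (hZG'.trans ((commutator_eq_bot_iff_center_eq_top G).mpr (eq_top_iff' _ |>.mpr hab)))

/-- The natural action of Aut(G) on an extraspecial p-group of exponent p (p odd)
has exactly three orbits. -/
theorem extraspecial_exp_p_orbit_count {p : ℕ} (hp : p.Prime) (hodd : Odd p)
    (G : Type*) [Group G] [Finite G] (hG : IsExtraspecial p G)
    (hexp : Monoid.exponent G = p) :
    Nat.card (MulAction.orbitRel.Quotient (MulAut G) G) = 3 :=
  extraspecial_exp_p_orbit_count_general hp G hG hexp
end

section
/- Let p be a prime, G a finite p-group, and w a word in the free group F_d on d generators such that the word map induced by w on G is not surjective. Then the word image w(G) is contained in the Frattini subgroup Φ(G). -/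
/-- The exponent sum of the generator `i`, as a homomorphism into `Multiplicative ℤ`. -/
private def expSum {d : ℕ} (i : Fin d) : FreeGroup (Fin d) →* Multiplicative ℤ :=
  FreeGroup.lift (fun j => if j = i then Multiplicative.ofAdd 1 else 1)

private lemma expSum_of {d : ℕ} (i j : Fin d) :
    Multiplicative.toAdd (expSum i (FreeGroup.of j)) = if j = i then 1 else 0 := by
  simp [expSum, apply_ite Multiplicative.toAdd]

/-- Evaluating a word on powers of a single element gives a power of that element,
with the exponent being a linear combination of the exponent sums. -/
private lemma lift_zpow {d : ℕ} (w : FreeGroup (Fin d)) {H : Type*} [Group H]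
    (x : H) (c : Fin d → ℤ) :
    FreeGroup.lift (fun j => x ^ c j) w
      = x ^ (∑ j, c j * Multiplicative.toAdd (expSum j w)) := by
  classical
  let ψ : FreeGroup (Fin d) →* H := MonoidHom.mk'
    (fun u => x ^ (∑ j, c j * Multiplicative.toAdd (expSum j u)))
    (by
      intro u v
      have h : ∀ j : Fin d, Multiplicative.toAdd (expSum j (u * v))
          = Multiplicative.toAdd (expSum j u) + Multiplicative.toAdd (expSum j v) := fun j => by
        rw [map_mul]; rfl
      simp only [h, mul_add, Finset.sum_add_distrib, zpow_add])
  have hψ : FreeGroup.lift (fun j => x ^ c j) = ψ := by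
    apply FreeGroup.ext_hom
    intro j'
    simp only [FreeGroup.lift_apply_of, ψ, MonoidHom.mk'_apply]
    congr 1
    simp [expSum_of, mul_ite, Finset.sum_ite_eq]
  rw [hψ]
  rfl

/-- A nonsurjective word map on a finite p-group has image contained in the
Frattini subgroup. -/
theorem nonsurjective_word_image_le_frattini {p : ℕ} (hp : p.Prime)
    (G : Type*) [Group G] [Finite G] (hG : IsPGroup p G)
    {d : ℕ} (w : FreeGroup (Fin d))
    (hw : ¬ Function.Surjective fun f : Fin d → G => FreeGroup.lift f w) :
    wordImage G w ⊆ (frattini G : Set G) := by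
  classical
  haveI : Fact p.Prime := ⟨hp⟩
  set a : Fin d → ℤ := fun i => Multiplicative.toAdd (expSum i w) with ha
  by_cases hdvd : ∀ i, (p : ℤ) ∣ a i
  · -- all exponent sums are divisible by p, so the word image lies in every maximal subgroup
    rintro g ⟨f, rfl⟩
    show FreeGroup.lift f w ∈ frattini G
    have hmem : ∀ M : Subgroup G, IsCoatom M → FreeGroup.lift f w ∈ M := by
      intro M hM
      haveI hMn : M.Normal :=
        ((isNilpotent_of_finite_tfae (G := G)).out 0 2 rfl rfl).mp hG.isNilpotent M hM
      set π := QuotientGroup.mk' M with hπ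
      have hπs : Function.Surjective π := QuotientGroup.mk'_surjective M
      -- every subgroup of the quotient is trivial
      have hsub : ∀ K : Subgroup (G ⧸ M), K = ⊥ ∨ K = ⊤ := by
        intro K
        rcases eq_or_ne (K.comap π) ⊤ with h | h
        · right
          rw [← Subgroup.map_comap_eq_self_of_surjective hπs K, h]
          exact Subgroup.map_top_of_surjective π hπs
        · left
          have h1 : M ≤ K.comap π := by
            intro m hm
            have hπm : π m = 1 := (QuotientGroup.eq_one_iff m).mpr hm
            simpa [Subgroup.mem_comap, hπm] using K.one_mem
          have h2 : K.comap π = M := by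
            by_contra hne
            exact h (hM.2 _ (lt_of_le_of_ne h1 (Ne.symm hne)))
          rw [← Subgroup.map_comap_eq_self_of_surjective hπs K, h2]
          ext q
          simp only [Subgroup.mem_map, Subgroup.mem_bot]
          constructor
          · rintro ⟨m, hm, rfl⟩
            exact (QuotientGroup.eq_one_iff m).mpr hm
          · rintro rfl
            exact ⟨1, M.one_mem, map_one π⟩
      have hQp : IsPGroup p (G ⧸ M) := hG.to_quotient M
      -- the quotient is nontrivial
      obtain ⟨g₀, hg₀⟩ : ∃ q : G ⧸ M, q ≠ 1 := by
        by_contra hc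
        push_neg at hc
        apply hM.1
        rw [eq_top_iff]
        intro x _
        exact (QuotientGroup.eq_one_iff x).mp (hc (π x))
      have hgen : Subgroup.zpowers g₀ = ⊤ :=
        (hsub _).resolve_left (by simpa [Subgroup.zpowers_eq_bot] using hg₀)
      -- g₀ has order p
      have hg₀p : g₀ ^ (p : ℤ) = 1 := by
        rcases hsub (Subgroup.zpowers (g₀ ^ (p : ℤ))) with hb | ht
        · simpa [Subgroup.zpowers_eq_bot] using hb
        · exfalso
          have hmem0 : g₀ ∈ Subgroup.zpowers (g₀ ^ (p : ℤ)) := ht ▸ Subgroup.mem_top g₀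
          obtain ⟨m, hm⟩ := Subgroup.mem_zpowers_iff.mp hmem0
          have h1 : g₀ ^ ((p : ℤ) * m - 1) = 1 := by
            have : g₀ ^ ((p : ℤ) * m) = g₀ := by rw [zpow_mul]; exact hm
            rw [zpow_sub, this, zpow_one, mul_inv_cancel]
          have hdvd1 : (orderOf g₀ : ℤ) ∣ (p : ℤ) * m - 1 :=
            orderOf_dvd_iff_zpow_eq_one.mpr h1
          obtain ⟨k, hk⟩ := IsPGroup.iff_orderOf.mp hQp g₀
          rcases Nat.eq_zero_or_pos k with rfl | hkpos
          · rw [pow_zero] at hk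
            exact hg₀ (orderOf_eq_one_iff.mp hk)
          · have hpd : (p : ℤ) ∣ (orderOf g₀ : ℤ) := by
              rw [hk]
              exact_mod_cast dvd_pow_self p hkpos.ne'
            have hp1 : (p : ℤ) ∣ 1 := by
              have h2 : (p : ℤ) ∣ (p : ℤ) * m - 1 := hpd.trans hdvd1
              have h3 : (p : ℤ) ∣ (p : ℤ) * m := Dvd.intro m rfl
              simpa using dvd_sub h3 h2
            have := Int.le_of_dvd one_pos hp1
            have := hp.two_le
            omega
      -- write each value in the quotient as a power of g₀
      have hsurj_pow : ∀ q : G ⧸ M, ∃ t : ℤ, g₀ ^ t = q := fun q =>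
        Subgroup.mem_zpowers_iff.mp (hgen ▸ Subgroup.mem_top q)
      choose m hm using fun j => hsurj_pow (π (f j))
      have hcomm : π (FreeGroup.lift f w) = FreeGroup.lift (fun j => π (f j)) w := by
        have h := FreeGroup.ext_hom (π.comp (FreeGroup.lift f))
          (FreeGroup.lift (fun j => π (f j))) (by simp)
        exact DFunLike.congr_fun h w
      have hone : FreeGroup.lift (fun j => π (f j)) w = 1 := by
        have hdvdsum : (p : ℤ) ∣ ∑ j, m j * a j :=
          Finset.dvd_sum fun j _ => (hdvd j).mul_left (m j)
        obtain ⟨t, ht⟩ := hdvdsum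
        calc FreeGroup.lift (fun j => π (f j)) w
            = FreeGroup.lift (fun j => g₀ ^ m j) w := by simp only [← hm]
          _ = g₀ ^ (∑ j, m j * a j) := lift_zpow w g₀ m
          _ = 1 := by rw [ht, zpow_mul, hg₀p, one_zpow]
      exact (QuotientGroup.eq_one_iff _).mp (hcomm.trans hone)
    simp only [frattini, Order.radical, Subgroup.mem_iInf, Set.mem_setOf_eq]
    exact hmem
  · -- some exponent sum is coprime to p, hence the word map is surjective: contradiction
    exfalso
    push_neg at hdvd
    obtain ⟨i, hi⟩ := hdvd
    apply hw
    intro g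
    obtain ⟨n, hn⟩ := IsPGroup.iff_card.mp hG
    have hprime : Prime (p : ℤ) := Nat.prime_iff_prime_int.mp hp
    have hcop : IsCoprime ((p : ℤ) ^ n) (a i) :=
      (hprime.coprime_iff_not_dvd.mpr hi).pow_left
    obtain ⟨v, u, huv⟩ := hcop
    -- g ^ (p^n) = 1
    have hgp : g ^ ((p : ℤ) ^ n) = 1 := by
      rw [show ((p : ℤ) ^ n) = ((p ^ n : ℕ) : ℤ) by push_cast; ring, zpow_natCast, ← hn]
      exact pow_card_eq_one'
    refine ⟨fun j => if j = i then g ^ u else 1, ?_⟩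
    show FreeGroup.lift (fun j => if j = i then g ^ u else 1) w = g
    have heq : (fun j => if j = i then g ^ u else (1 : G))
        = fun j => g ^ (if j = i then u else 0) := by
      funext j; split <;> simp
    rw [heq, lift_zpow]
    have hsum : (∑ j, (if j = i then u else 0) * a j) = u * a i := by
      simp [ite_mul, Finset.sum_ite_eq]
    rw [hsum, show u * a i = 1 - v * (p : ℤ) ^ n by linarith [huv]]
    rw [zpow_sub, zpow_one, mul_comm v, zpow_mul, hgp, one_zpow, inv_one, mul_one]
end

section
/- Let r ≥ 1 and let I = (i_1,…,i_r), J = (j_1,…,j_r) be tuples of integers with i_1+⋯+i_r = 0 and j_1+⋯+j_r = 0. Then there exist tuples Ĩ = (ĩ_1,…,ĩ_r), J̃ = (j̃_1,…,j̃_r) of integers such that for every nilpotent group G of nilpotency class at most 2, the words w_{I,J} = x^{i_1}y^{j_1}x^{i_2}y^{j_2}⋯x^{i_r}y^{j_r} and c_{Ĩ,J̃} = [x^{ĩ_1},y^{j̃_1}][x^{ĩ_2},y^{j̃_2}]⋯[x^{ĩ_r},y^{j̃_r}] in the free group F_2 on x, y have the same image on G. -/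
/-- The word x^{i₁}y^{j₁}⋯x^{i_r}y^{j_r}. -/
def wIJ (r : ℕ) (I J : Fin r → ℤ) : FreeGroup (Fin 2) :=
  (List.ofFn fun k : Fin r =>
    (FreeGroup.of (0 : Fin 2)) ^ (I k) * (FreeGroup.of (1 : Fin 2)) ^ (J k)).prod

open scoped commutatorElement in
/-- The word [x^{i₁},y^{j₁}]⋯[x^{i_r},y^{j_r}]. -/
def cIJ (r : ℕ) (I J : Fin r → ℤ) : FreeGroup (Fin 2) :=
  (List.ofFn fun k : Fin r =>
    ⁅(FreeGroup.of (0 : Fin 2)) ^ (I k), (FreeGroup.of (1 : Fin 2)) ^ (J k)⁆).prod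

/-!
In a group of class at most 2 the commutator map is bilinear with central values, so
`⁅a ^ m, b ^ n⁆ = ⁅a, b⁆ ^ (m * n)`, and collecting all powers of `a` to the left in
`a ^ i₁ * b ^ j₁ ⋯ a ^ i_r * b ^ j_r` leaves `a ^ (∑ i) * b ^ (∑ j) * ⁅a, b⁆ ^ M`, with an
integer `M` depending only on `I` and `J`. When both sums vanish, `w_{I,J}` therefore
evaluates to `⁅a, b⁆ ^ M`, which is also the value of `c_{Ĩ,J̃}` for `Ĩ = (M, 0, …, 0)` and
`J̃ = (1, …, 1)`.
-/

open scoped commutatorElement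

/-- The exponent of `⁅a, b⁆` left over after collecting `∏ a ^ i * b ^ j` into
`a ^ (∑ i) * b ^ (∑ j)` in a group of class at most 2. -/
def collectionExponent : List (ℤ × ℤ) → ℤ
  | [] => 0
  | p :: l => collectionExponent l - p.2 * (l.map Prod.fst).sum

section CentralCommutators

variable {G : Type*} [Group G]

theorem commute_commutatorElement_of_commutator_le_center
    (hG : commutator G ≤ Subgroup.center G) (a b g : G) : Commute ⁅a, b⁆ g :=
  (Subgroup.mem_center_iff.mp
    (hG (commutator_def G ▸ Subgroup.commutator_mem_commutator trivial trivial)) g).symm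

theorem commutatorElement_mul_left_of_central (hc : ∀ a b g : G, Commute ⁅a, b⁆ g)
    (a b c : G) : ⁅a * b, c⁆ = ⁅a, c⁆ * ⁅b, c⁆ := by
  rw [commutatorElement_mul_left_eq_conj_mul, ← (hc b c a).eq, mul_inv_cancel_right,
    (hc b c _).eq]

theorem commutatorElement_mul_right_of_central (hc : ∀ a b g : G, Commute ⁅a, b⁆ g)
    (a b c : G) : ⁅a, b * c⁆ = ⁅a, b⁆ * ⁅a, c⁆ := by
  rw [commutatorElement_mul_right_eq_mul_conj, mul_assoc _ b, ← (hc a c b).eq, ← mul_assoc,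
    mul_inv_cancel_right]

theorem commutatorElement_zpow_zpow_of_central (hc : ∀ a b g : G, Commute ⁅a, b⁆ g)
    (a b : G) (m n : ℤ) : ⁅a ^ m, b ^ n⁆ = ⁅a, b⁆ ^ (m * n) := by
  let commLeft : G →* G :=
    MonoidHom.mk' (⁅·, b ^ n⁆) (commutatorElement_mul_left_of_central hc · · _)
  let commRight : G →* G :=
    MonoidHom.mk' (⁅a, ·⁆) (commutatorElement_mul_right_of_central hc a)
  calc ⁅a ^ m, b ^ n⁆ = commLeft (a ^ m) := rfl
    _ = commRight (b ^ n) ^ m := by rw [map_zpow]; rfl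
    _ = ⁅a, b⁆ ^ (m * n) := by rw [map_zpow, ← zpow_mul, mul_comm]; rfl

theorem zpow_mul_zpow_swap_of_central (hc : ∀ a b g : G, Commute ⁅a, b⁆ g)
    (a b : G) (j s : ℤ) : b ^ j * a ^ s = a ^ s * b ^ j * ⁅a, b⁆ ^ (-(j * s)) := by
  have hswap : ⁅b ^ j, a ^ s⁆ = ⁅a, b⁆ ^ (-(j * s)) := by
    rw [← commutatorElement_inv, commutatorElement_zpow_zpow_of_central hc, ← zpow_neg,
      mul_comm]
  rw [← hswap, ← (hc _ _ _).eq]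
  group

theorem prod_zpow_mul_zpow_of_central (hc : ∀ a b g : G, Commute ⁅a, b⁆ g)
    (a b : G) (l : List (ℤ × ℤ)) :
    (l.map fun p => a ^ p.1 * b ^ p.2).prod =
      a ^ (l.map Prod.fst).sum * b ^ (l.map Prod.snd).sum * ⁅a, b⁆ ^ collectionExponent l := by
  induction l with
  | nil => simp [collectionExponent]
  | cons p l ih =>
    set S := (l.map Prod.fst).sum
    set T := (l.map Prod.snd).sum
    simp only [List.map_cons, List.prod_cons, List.sum_cons, ih, collectionExponent]
    calc a ^ p.1 * b ^ p.2 * (a ^ S * b ^ T * ⁅a, b⁆ ^ collectionExponent l)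
        = a ^ p.1 * (b ^ p.2 * a ^ S) * b ^ T * ⁅a, b⁆ ^ collectionExponent l := by
          simp only [mul_assoc]
      _ = a ^ p.1 * a ^ S * b ^ p.2 * (⁅a, b⁆ ^ (-(p.2 * S)) * b ^ T) *
            ⁅a, b⁆ ^ collectionExponent l := by
          rw [zpow_mul_zpow_swap_of_central hc]; simp only [mul_assoc]
      _ = a ^ (p.1 + S) * b ^ (p.2 + T) * ⁅a, b⁆ ^ (collectionExponent l - p.2 * S) := by
          rw [((hc a b _).zpow_left _).eq, sub_eq_neg_add, zpow_add, zpow_add, zpow_add]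
          simp only [mul_assoc]

theorem prod_ofFn_zpow (g : G) {n : ℕ} (e : Fin n → ℤ) :
    (List.ofFn fun k => g ^ e k).prod = g ^ ∑ k, e k := by
  induction n with
  | zero => simp
  | succ n ih => simp [List.ofFn_succ, Fin.sum_univ_succ, zpow_add, ih]

theorem lift_wIJ_of_central (hc : ∀ a b g : G, Commute ⁅a, b⁆ g)
    {r : ℕ} {I J : Fin r → ℤ} (hI : ∑ k, I k = 0) (hJ : ∑ k, J k = 0) (f : Fin 2 → G) :
    FreeGroup.lift f (wIJ r I J) =
      ⁅f 0, f 1⁆ ^ collectionExponent (List.ofFn fun k => (I k, J k)) := by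
  have hcollect := prod_zpow_mul_zpow_of_central hc (f 0) (f 1) (List.ofFn fun k => (I k, J k))
  simp only [List.map_ofFn, Function.comp_def, List.sum_ofFn, hI, hJ, zpow_zero,
    one_mul] at hcollect
  simpa [wIJ, map_list_prod, List.map_ofFn, Function.comp_def] using hcollect

theorem lift_cIJ_of_central (hc : ∀ a b g : G, Commute ⁅a, b⁆ g)
    {r : ℕ} (I J : Fin r → ℤ) (f : Fin 2 → G) :
    FreeGroup.lift f (cIJ r I J) = ⁅f 0, f 1⁆ ^ ∑ k, I k * J k := by
  simp [cIJ, map_list_prod, List.map_ofFn, Function.comp_def, map_commutatorElement,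
    commutatorElement_zpow_zpow_of_central hc, prod_ofFn_zpow]

end CentralCommutators

/-- If the entries of I and of J each sum to 0, there exist Ĩ, J̃ such that on every
nilpotent group of class at most 2 the words w_{I,J} and c_{Ĩ,J̃} have the same image. -/
theorem wIJ_eq_cIJ_image (r : ℕ) (hr : 1 ≤ r) (I J : Fin r → ℤ)
    (hI : ∑ k, I k = 0) (hJ : ∑ k, J k = 0) :
    ∃ I' J' : Fin r → ℤ,
      ∀ (G : Type*) [Group G], commutator G ≤ Subgroup.center G →
        wordImage G (wIJ r I J) = wordImage G (cIJ r I' J') := by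
  refine ⟨Pi.single ⟨0, hr⟩ (collectionExponent (List.ofFn fun k => (I k, J k))), 1,
    fun G _ hG => ?_⟩
  have hc := commute_commutatorElement_of_commutator_le_center hG
  refine congrArg Set.range (funext fun f => ?_)
  rw [lift_wIJ_of_central hc hI hJ, lift_cIJ_of_central hc]
  simp
end

section
/- Let G be a nilpotent group of nilpotency class at most 2, let w be a word in the free group F_2 on two generators, and let a ∈ w(G). Then for every integer n, a^n ∈ w(G). -/
/-!
In a group of class at most 2 every word map in two variables factors through the integral
Heisenberg group `H`, the free class-2 group on `X` and `Y`: `w(g, h) = φ (w(X, Y))` for the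
homomorphism `φ : H → G` sending `X ↦ g`, `Y ↦ h`. So it suffices to find an endomorphism `ψ`
of `H` with `ψ x = x ^ n` for `x = w(X, Y)`, since then `a ^ n = w(φ (ψ X), φ (ψ Y))`.
Write the abelianization of `x` as `d • (p, q)` with `p`, `q` coprime and take an automorphism
`σ` of `H` with `X ↦ (p, q, 0)`. Then `σ⁻¹ x` has `b`-coordinate `0`, and on such elements the
endomorphism `X ↦ X ^ n`, `Y ↦ Y` is `y ↦ y ^ n`; so `ψ = σ ∘ (X ↦ X ^ n, Y ↦ Y) ∘ σ⁻¹`.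
-/

open scoped commutatorElement

theorem exists_isCoprime_mul_eq_mul (α β : ℤ) : ∃ p q : ℤ, IsCoprime p q ∧ p * β = q * α := by
  by_cases h : Int.gcd α β = 0
  · obtain ⟨rfl, rfl⟩ := Int.gcd_eq_zero_iff.mp h
    exact ⟨1, 0, isCoprime_one_left, by ring⟩
  · obtain ⟨p, q, hpq, hα, hβ⟩ := Int.exists_gcd_one (Nat.pos_of_ne_zero h)
    refine ⟨p, q, Int.isCoprime_iff_gcd_eq_one.mpr hpq, ?_⟩
    linear_combination p * hβ - q * hα

theorem map_mem_wordImage {d : ℕ} {H G : Type*} [Group H] [Group G] (φ : H →* G)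
    {w : FreeGroup (Fin d)} {x : H} (hx : x ∈ wordImage H w) : φ x ∈ wordImage G w := by
  obtain ⟨f, rfl⟩ := hx
  exact ⟨φ ∘ f, (FreeGroup.lift_unique (φ.comp (FreeGroup.lift f)) (by simp)).symm⟩

section NilpotencyClassTwo
variable {G : Type*} [Group G]

theorem commutatorElement_mem_center_of_le_center (hG : commutator G ≤ Subgroup.center G)
    (g h : G) : ⁅g, h⁆ ∈ Subgroup.center G :=
  hG (Subgroup.commutator_mem_commutator (Subgroup.mem_top g) (Subgroup.mem_top h))

theorem commutatorElement_mul_left_of_le_center_s13 (hG : commutator G ≤ Subgroup.center G)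
    (x y k : G) : ⁅x * y, k⁆ = ⁅x, k⁆ * ⁅y, k⁆ := by
  rw [commutatorElement_mul_left_eq_conj_mul,
    Subgroup.mem_center_iff.mp (commutatorElement_mem_center_of_le_center hG x k),
    Subgroup.mem_center_iff.mp (commutatorElement_mem_center_of_le_center hG y k)]
  group

theorem commutatorElement_zpow_zpow_of_le_center (hG : commutator G ≤ Subgroup.center G)
    (g h : G) (m n : ℤ) : ⁅g ^ m, h ^ n⁆ = ⁅g, h⁆ ^ (m * n) := by
  have zpow_left : ∀ (x k : G) (m : ℤ), ⁅x ^ m, k⁆ = ⁅x, k⁆ ^ m := fun x k m =>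
    map_zpow (MonoidHom.mk' (⁅·, k⁆) (commutatorElement_mul_left_of_le_center_s13 hG · · k)) x m
  rw [zpow_left, ← commutatorElement_inv, zpow_left, ← inv_zpow, commutatorElement_inv, ← zpow_mul,
    mul_comm]

theorem zpow_mul_zpow_of_le_center (hG : commutator G ≤ Subgroup.center G) (g h : G) (m n : ℤ) :
    g ^ m * h ^ n = h ^ n * g ^ m * ⁅g, h⁆ ^ (m * n) := by
  rw [← commutatorElement_zpow_zpow_of_le_center hG,
    Subgroup.mem_center_iff.mp (commutatorElement_mem_center_of_le_center hG _ _),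
    commutatorElement_def]
  group

end NilpotencyClassTwo

/-- `⟨a, b, c⟩` is the unitriangular matrix `!![1, a, c; 0, 1, b; 0, 0, 1]`. -/
@[ext]
structure Heisenberg where
  a : ℤ
  b : ℤ
  c : ℤ

namespace Heisenberg

instance : Mul Heisenberg := ⟨fun x y => ⟨x.a + y.a, x.b + y.b, x.c + y.c + x.a * y.b⟩⟩
instance : One Heisenberg := ⟨⟨0, 0, 0⟩⟩
instance : Inv Heisenberg := ⟨fun x => ⟨-x.a, -x.b, -x.c + x.a * x.b⟩⟩

@[simp] theorem mul_a (x y : Heisenberg) : (x * y).a = x.a + y.a := rfl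
@[simp] theorem mul_b (x y : Heisenberg) : (x * y).b = x.b + y.b := rfl
@[simp] theorem mul_c (x y : Heisenberg) : (x * y).c = x.c + y.c + x.a * y.b := rfl
@[simp] theorem one_a : (1 : Heisenberg).a = 0 := rfl
@[simp] theorem one_b : (1 : Heisenberg).b = 0 := rfl
@[simp] theorem one_c : (1 : Heisenberg).c = 0 := rfl
@[simp] theorem inv_a (x : Heisenberg) : x⁻¹.a = -x.a := rfl
@[simp] theorem inv_b (x : Heisenberg) : x⁻¹.b = -x.b := rfl
@[simp] theorem inv_c (x : Heisenberg) : x⁻¹.c = -x.c + x.a * x.b := rfl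

instance : Group Heisenberg where
  mul_assoc x y z := by ext <;> simp <;> ring
  one_mul x := by ext <;> simp
  mul_one x := by ext <;> simp
  inv_mul_cancel x := by ext <;> simp

@[simp] theorem zpow_a (x : Heisenberg) (n : ℤ) : (x ^ n).a = n * x.a := by
  induction n using Int.induction_on with
  | zero => simp
  | succ k ih => rw [zpow_add_one, mul_a, ih]; ring
  | pred k ih => rw [zpow_sub_one, mul_a, inv_a, ih]; ring

@[simp] theorem zpow_b (x : Heisenberg) (n : ℤ) : (x ^ n).b = n * x.b := by
  induction n using Int.induction_on with
  | zero => simp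
  | succ k ih => rw [zpow_add_one, mul_b, ih]; ring
  | pred k ih => rw [zpow_sub_one, mul_b, inv_b, ih]; ring

theorem zpow_of_a_mul_b_eq_zero {x : Heisenberg} (hx : x.a * x.b = 0) (n : ℤ) :
    x ^ n = ⟨n * x.a, n * x.b, n * x.c⟩ := by
  induction n using Int.induction_on with
  | zero => ext <;> simp
  | succ k ih => rw [zpow_add_one, ih]; ext <;> simp <;> grind
  | pred k ih => rw [zpow_sub_one, ih]; ext <;> simp <;> grind

theorem commutatorElement_eq (x y : Heisenberg) : ⁅x, y⁆ = ⟨0, 0, x.a * y.b - x.b * y.a⟩ := by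
  ext <;> simp [commutatorElement_def]
  ring

theorem commutator_le_center : commutator Heisenberg ≤ Subgroup.center Heisenberg := by
  rw [commutator_def, Subgroup.commutator_le]
  intro x _ y _
  rw [commutatorElement_eq, Subgroup.mem_center_iff]
  intro g
  ext <;> simp [add_comm]

def X : Heisenberg := ⟨1, 0, 0⟩
def Y : Heisenberg := ⟨0, 1, 0⟩

@[simp] theorem X_zpow (n : ℤ) : X ^ n = ⟨n, 0, 0⟩ := by
  rw [zpow_of_a_mul_b_eq_zero (by simp [X])]
  simp [X]

@[simp] theorem Y_zpow (n : ℤ) : Y ^ n = ⟨0, n, 0⟩ := by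
  rw [zpow_of_a_mul_b_eq_zero (by simp [Y])]
  simp [Y]

theorem eq_Y_zpow_mul_X_zpow_mul (x : Heisenberg) : x = Y ^ x.b * X ^ x.a * ⁅X, Y⁆ ^ x.c := by
  rw [commutatorElement_eq]
  ext <;> simp [zpow_of_a_mul_b_eq_zero]
  simp [X, Y]

section lift
variable {G : Type*} [Group G]

theorem hom_ext {φ ψ : Heisenberg →* G} (hX : φ X = ψ X) (hY : φ Y = ψ Y) : φ = ψ := by
  ext x
  rw [eq_Y_zpow_mul_X_zpow_mul x]
  simp only [map_mul, map_zpow, map_commutatorElement, hX, hY]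

variable (hG : commutator G ≤ Subgroup.center G)

def lift (g h : G) : Heisenberg →* G where
  toFun x := h ^ x.b * g ^ x.a * ⁅g, h⁆ ^ x.c
  map_one' := by simp
  map_mul' x y := by
    have hz : ∀ (k : ℤ) (x : G), x * ⁅g, h⁆ ^ k = ⁅g, h⁆ ^ k * x := fun k =>
      Subgroup.mem_center_iff.mp (zpow_mem (commutatorElement_mem_center_of_le_center hG g h) k)
    show h ^ (x.b + y.b) * g ^ (x.a + y.a) * ⁅g, h⁆ ^ (x.c + y.c + x.a * y.b)
      = h ^ x.b * g ^ x.a * ⁅g, h⁆ ^ x.c * (h ^ y.b * g ^ y.a * ⁅g, h⁆ ^ y.c)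
    symm
    calc _ = h ^ x.b * g ^ x.a * (⁅g, h⁆ ^ x.c * (h ^ y.b * g ^ y.a)) * ⁅g, h⁆ ^ y.c := by group
    _ = h ^ x.b * (g ^ x.a * h ^ y.b) * g ^ y.a * ⁅g, h⁆ ^ x.c * ⁅g, h⁆ ^ y.c := by
        rw [← hz]; group
    _ = h ^ x.b * h ^ y.b * g ^ x.a * (⁅g, h⁆ ^ (x.a * y.b) * g ^ y.a) * ⁅g, h⁆ ^ x.c
          * ⁅g, h⁆ ^ y.c := by
        rw [zpow_mul_zpow_of_le_center hG]; group
    _ = _ := by rw [← hz]; group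

theorem lift_apply (g h : G) (x : Heisenberg) :
    lift hG g h x = h ^ x.b * g ^ x.a * ⁅g, h⁆ ^ x.c := rfl

@[simp] theorem lift_X (g h : G) : lift hG g h X = g := by simp [lift_apply, X]

@[simp] theorem lift_Y (g h : G) : lift hG g h Y = h := by simp [lift_apply, Y]

theorem freeGroup_lift_eq_lift (f : Fin 2 → G) (w : FreeGroup (Fin 2)) :
    FreeGroup.lift f w = lift hG (f 0) (f 1) (FreeGroup.lift ![X, Y] w) := by
  refine (FreeGroup.lift_unique ((lift hG (f 0) (f 1)).comp (FreeGroup.lift ![X, Y])) ?_).symm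
  intro i
  fin_cases i <;> simp

end lift

theorem exists_lift_eq_mk {g h : Heisenberg} (hgh : g.a * h.b - g.b * h.a = 1) (A B C : ℤ) :
    ∃ k, lift commutator_le_center g h ⟨A, B, k⟩ = ⟨A * g.a + B * h.a, A * g.b + B * h.b, C⟩ := by
  refine ⟨C - (h ^ B * g ^ A).c, ?_⟩
  rw [lift_apply, commutatorElement_eq, hgh]
  ext <;> simp [zpow_of_a_mul_b_eq_zero, add_comm]

theorem lift_X_zpow_Y_of_b_eq_zero {y : Heisenberg} (hy : y.b = 0) (n : ℤ) :
    lift commutator_le_center (X ^ n) Y y = y ^ n := by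
  rw [X_zpow, lift_apply, commutatorElement_eq, hy]
  ext <;> simp [Y, zpow_of_a_mul_b_eq_zero, hy, mul_comm]

theorem exists_endomorphism_apply_eq_zpow (x : Heisenberg) (n : ℤ) :
    ∃ ψ : Heisenberg →* Heisenberg, ψ x = x ^ n := by
  obtain ⟨p, q, ⟨u, v, huv⟩, hpq⟩ := exists_isCoprime_mul_eq_mul x.a x.b
  have hdet : p * u - q * -v = 1 := by linear_combination huv
  obtain ⟨k₁, hk₁⟩ := exists_lift_eq_mk (g := ⟨p, q, 0⟩) (h := ⟨-v, u, 0⟩) hdet u (-q) 0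
  obtain ⟨k₂, hk₂⟩ := exists_lift_eq_mk (g := ⟨p, q, 0⟩) (h := ⟨-v, u, 0⟩) hdet v p 0
  let σ := lift commutator_le_center ⟨p, q, 0⟩ ⟨-v, u, 0⟩
  -- `τ` inverts `σ` on abelianizations, and `k₁`, `k₂` correct the central parts so that
  -- `σ ∘ τ = id`.
  let τ := lift commutator_le_center ⟨u, -q, k₁⟩ ⟨v, p, k₂⟩
  have hστ : σ.comp τ = MonoidHom.id _ := by
    refine hom_ext ?_ ?_
    · rw [MonoidHom.comp_apply, lift_X, hk₁]
      ext <;> simp [X] <;> linarith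
    · rw [MonoidHom.comp_apply, lift_Y, hk₂]
      ext <;> simp [Y] <;> linarith
  have hτx : (τ x).b = 0 := by
    simp only [τ, lift_apply, commutatorElement_eq, mul_b, zpow_b, mul_zero, add_zero]
    linear_combination hpq
  refine ⟨σ.comp ((lift commutator_le_center (X ^ n) Y).comp τ), ?_⟩
  rw [MonoidHom.comp_apply, MonoidHom.comp_apply, lift_X_zpow_Y_of_b_eq_zero hτx, map_zpow,
    ← MonoidHom.comp_apply, hστ, MonoidHom.id_apply]

end Heisenberg

/-- In a nilpotent group of class at most 2, word images of two-variable words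
are closed under taking integer powers. -/
theorem word_image_closed_under_powers (G : Type*) [Group G]
    (hG : commutator G ≤ Subgroup.center G) (w : FreeGroup (Fin 2))
    (a : G) (ha : a ∈ wordImage G w) (n : ℤ) :
    a ^ n ∈ wordImage G w := by
  obtain ⟨f, rfl⟩ := ha
  dsimp only
  obtain ⟨ψ, hψ⟩ := Heisenberg.exists_endomorphism_apply_eq_zpow (FreeGroup.lift ![.X, .Y] w) n
  rw [Heisenberg.freeGroup_lift_eq_lift hG, ← map_zpow, ← hψ]
  exact map_mem_wordImage _ (map_mem_wordImage ψ ⟨_, rfl⟩)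
end

section
/- Let G be a finite group. Then there exist d ≥ 1 and a word w in the free group F_d on d generators such that the word image w(G) equals the commutator subgroup [G,G] (as a set). -/
/-! The powers `Sⁿ` of the set `S` of commutators increase with `n` (as `1 ∈ S`) and exhaust the
submonoid generated by `S`. In a finite group that submonoid is already the subgroup `[G, G]`,
so `Sⁿ = [G, G]` for large `n`, and `Sⁿ` is the image of the word `[x₁, y₁] ⋯ [xₙ, yₙ]`. -/

open Filter
open scoped Pointwise commutatorElement

namespace Submonoid

variable {M : Type*} [Monoid M] {s : Set M}

theorem exists_mem_pow_of_mem_closure {x : M} (hx : x ∈ closure s) : ∃ n, x ∈ s ^ n := by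
  induction hx using closure_induction with
  | mem x hx => exact ⟨1, by rwa [pow_one]⟩
  | one => exact ⟨0, by rw [pow_zero]; rfl⟩
  | mul x y _ _ hx hy =>
    obtain ⟨m, hm⟩ := hx
    obtain ⟨n, hn⟩ := hy
    exact ⟨m + n, by rw [pow_add]; exact Set.mul_mem_mul hm hn⟩

theorem pow_subset_closure (n : ℕ) : s ^ n ⊆ closure s :=
  subset_closure.trans (closure_pow_le (s := s))

theorem eventually_pow_eq_closure [Finite M] (hs : 1 ∈ s) :
    ∀ᶠ n in atTop, s ^ n = closure s := by
  have h : ∀ x : closure s, ∀ᶠ n in atTop, (x : M) ∈ s ^ n := fun x ↦ by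
    obtain ⟨m, hm⟩ := exists_mem_pow_of_mem_closure x.2
    exact eventually_atTop.2 ⟨m, fun n hn ↦ Set.pow_subset_pow_right hs hn hm⟩
  filter_upwards [eventually_all.2 h] with n hn
  exact (pow_subset_closure n).antisymm fun x hx ↦ hn ⟨x, hx⟩

end Submonoid

theorem eventually_commutatorSet_pow_eq (G : Type*) [Group G] [Finite G] :
    ∀ᶠ n in atTop, commutatorSet G ^ n = (commutator G : Set G) := by
  rw [commutator_eq_closure, ← Subgroup.coe_toSubmonoid, Subgroup.closure_toSubmonoid_of_finite]
  exact Submonoid.eventually_pow_eq_closure (one_mem_commutatorSet G)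

def commutatorWord (n : ℕ) : FreeGroup (Fin (n + n)) :=
  (List.ofFn fun i : Fin n ↦ ⁅FreeGroup.of (Fin.castAdd n i), FreeGroup.of (Fin.natAdd n i)⁆).prod

theorem lift_commutatorWord {G : Type*} [Group G] {n : ℕ} (f : Fin (n + n) → G) :
    FreeGroup.lift f (commutatorWord n) =
      (List.ofFn fun i ↦ ⁅f (Fin.castAdd n i), f (Fin.natAdd n i)⁆).prod := by
  simp [commutatorWord, map_list_prod, List.map_ofFn, Function.comp_def]

theorem wordImage_commutatorWord (G : Type*) [Group G] (n : ℕ) :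
    wordImage G (commutatorWord n) = commutatorSet G ^ n := by
  ext g
  simp only [wordImage, Set.mem_range, lift_commutatorWord, Set.mem_pow]
  constructor
  · rintro ⟨f, rfl⟩
    exact ⟨fun i ↦ ⟨_, f (Fin.castAdd n i), f (Fin.natAdd n i), rfl⟩, rfl⟩
  · rintro ⟨c, rfl⟩
    choose a b hab using fun i ↦ (c i).2
    exact ⟨Fin.append a b, by simp only [Fin.append_left, Fin.append_right, hab]⟩

/-- The commutator subgroup of a finite group is a word image. -/
theorem commutator_is_word_image (G : Type*) [Group G] [Finite G] :
    ∃ (d : ℕ) (_ : 1 ≤ d) (w : FreeGroup (Fin d)),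
      wordImage G w = (commutator G : Set G) := by
  obtain ⟨n, hn, hpow⟩ := ((eventually_ge_atTop 1).and (eventually_commutatorSet_pow_eq G)).exists
  exact ⟨n + n, by omega, commutatorWord n, (wordImage_commutatorWord G n).trans hpow⟩
end

section
/- Let G be a nonabelian finite group such that for every d ≥ 1 and every word w in the free group F_d, the word image w(G) is one of {1}, Z(G) or G. Then there is a prime p such that G is a special p-group, i.e. G is a finite p-group whose center Z(G), commutator subgroup [G,G] and Frattini subgroup Φ(G) coincide and are elementary abelian (of exponent p). -/
/-- G is a special p-group: a p-group whose center, commutator subgroup and Frattini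
subgroup coincide and are elementary abelian of exponent p. -/
def IsSpecial (p : ℕ) (G : Type*) [Group G] : Prop :=
  IsPGroup p G ∧ Subgroup.center G = commutator G ∧
    Subgroup.center G = frattini G ∧ Monoid.exponent (Subgroup.center G) = p

/-!
Power words and the commutator word do all the work. For a prime `s`, the power word
`x ^ m_s`, where `m_s` is the `s'`-part of the exponent of `G`, has as image a set of
`s`-elements containing every element of order `s`. It cannot be `{1}`, so it is `Z(G)` or `G`;
comparing two primes dividing `|G|` shows there is only one, so `G` is a `p`-group, hence
nilpotent. In a nilpotent group `[G,G]` lies in every maximal subgroup, so the commutator word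
has image `Z(G)` and `Z(G) = [G,G] ≤ Φ(G)`. The `p`-th powers are not all of `G`, so they lie
in `Z(G)`; the `p²`-th powers then cannot be `Z(G)` (the `p`-th power map of `Z(G)` is not
onto), which forces `Z(G)` to have exponent `p`. Finally `G/[G,G]` is elementary abelian, i.e.
an `𝔽_p`-vector space, whose Frattini subgroup is trivial; so `Φ(G) ≤ [G,G]`.
-/

open scoped commutatorElement

def IsOneOrCenterOrUniv {G : Type*} [Group G] (S : Set G) : Prop :=
  S = {1} ∨ S = (Subgroup.center G : Set G) ∨ S = Set.univ

section WordImages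

variable (G : Type*) [Group G]

theorem wordImage_of_pow (n : ℕ) :
    wordImage G (FreeGroup.of (0 : Fin 1) ^ n) = Set.range fun g : G => g ^ n := by
  ext x
  constructor
  · rintro ⟨f, rfl⟩
    exact ⟨f 0, by simp⟩
  · rintro ⟨g, rfl⟩
    exact ⟨fun _ => g, by simp⟩

theorem wordImage_commutatorElement :
    wordImage G ⁅FreeGroup.of (0 : Fin 2), FreeGroup.of (1 : Fin 2)⁆ = commutatorSet G := by
  ext x
  constructor
  · rintro ⟨f, rfl⟩
    exact ⟨f 0, f 1, by simp [map_commutatorElement]⟩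
  · rintro ⟨a, b, rfl⟩
    exact ⟨![a, b], by simp [map_commutatorElement]⟩

end WordImages

section Frattini

theorem CommGroup.exists_monoidHom_zmod_apply_ne_one {H : Type*} [CommGroup H] {p : ℕ}
    [Fact p.Prime] (hH : ∀ h : H, h ^ p = 1) {h : H} (h1 : h ≠ 1) :
    ∃ φ : H →* Multiplicative (ZMod p), φ h ≠ 1 := by
  -- The `𝔽_p`-module structure is passed explicitly: instance search gets stuck on a local
  -- `AddCommGroup.zmodModule` instance.
  obtain ⟨f, hf⟩ := @Module.Projective.exists_dual_ne_zero (Additive H) _ (ZMod p) _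
    (AddCommGroup.zmodModule fun x => hH x.toMul) _ (Additive.ofMul h) h1
  exact ⟨AddMonoidHom.toMultiplicativeRight f.toAddMonoidHom, hf⟩

theorem CommGroup.frattini_eq_bot_of_pow_eq_one {H : Type*} [CommGroup H] {p : ℕ}
    (hp : p.Prime) (hH : ∀ h : H, h ^ p = 1) : frattini H = ⊥ := by
  have := Fact.mk hp
  refine (Subgroup.eq_bot_iff_forall _).mpr fun h hh => by_contra fun h1 => ?_
  obtain ⟨φ, hφ⟩ := CommGroup.exists_monoidHom_zmod_apply_ne_one hH h1
  have : IsSimpleGroup (Multiplicative (ZMod p)) :=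
    isSimpleGroup_of_prime_card ((Nat.card_congr Multiplicative.toAdd).trans (Nat.card_zmod p))
  have hsurj : Function.Surjective φ := by
    rw [← MonoidHom.range_eq_top]
    exact (eq_bot_or_eq_top φ.range).resolve_left fun hb =>
      hφ (by rw [← Subgroup.mem_bot, ← hb]; exact ⟨h, rfl⟩)
  have hker : IsCoatom φ.ker := by
    simpa using Subgroup.isCoatom_comap_of_surjective hsurj isCoatom_bot
  exact hφ (frattini_le_coatom hker hh)

theorem frattini_le_commutator_of_pow_mem {G : Type*} [Group G] {p : ℕ} (hp : p.Prime)
    (hG : ∀ g : G, g ^ p ∈ commutator G) : frattini G ≤ commutator G := by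
  have hAb : frattini (Abelianization G) = ⊥ := by
    refine CommGroup.frattini_eq_bot_of_pow_eq_one hp fun h => ?_
    obtain ⟨g, rfl⟩ : ∃ g, Abelianization.of g = h := QuotientGroup.mk_surjective h
    rw [← map_pow, ← MonoidHom.mem_ker, Abelianization.ker_of]
    exact hG g
  calc frattini G ≤ (frattini (Abelianization G)).comap Abelianization.of :=
        frattini_le_comap_frattini_of_surjective QuotientGroup.mk_surjective
    _ = commutator G := by rw [hAb, MonoidHom.comap_bot, Abelianization.ker_of]

theorem isSimpleGroup_quotient_of_isCoatom {G : Type*} [Group G] {M : Subgroup G}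
    [M.Normal] (hM : IsCoatom M) : IsSimpleGroup (G ⧸ M) := by
  have : IsSimpleOrder (Subgroup (G ⧸ M)) :=
    (show Subgroup (G ⧸ M) ≃o Set.Ici M from
      QuotientGroup.comapMk'OrderIso M).isSimpleOrder_iff.mpr
        (Set.isSimpleOrder_Ici_iff_isCoatom.mpr hM)
  have : Nontrivial (G ⧸ M) := Subgroup.nontrivial_iff.mp inferInstance
  exact ⟨fun N _ => eq_bot_or_eq_top N⟩

theorem commutator_le_of_isCoatom {G : Type*} [Group G] [Group.IsNilpotent G]
    {M : Subgroup G} (hM : IsCoatom M) : commutator G ≤ M := by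
  have : M.Normal := Subgroup.NormalizerCondition.normal_of_coatom M
    Group.normalizerCondition_of_isNilpotent hM
  -- a nilpotent simple group is abelian
  have := isSimpleGroup_quotient_of_isCoatom hM
  rw [← QuotientGroup.ker_mk' M]
  exact Abelianization.commutator_subset_ker (A := G ⧸ M) (QuotientGroup.mk' M)

theorem commutator_ne_top_of_isNilpotent {G : Type*} [Group G] [Finite G] [Nontrivial G]
    [Group.IsNilpotent G] : commutator G ≠ ⊤ := by
  obtain ⟨M, hM, -⟩ := (eq_top_or_exists_le_coatom (⊥ : Subgroup G)).resolve_left bot_ne_top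
  exact fun h => hM.1 (top_le_iff.mp (h ▸ commutator_le_of_isCoatom hM))

theorem frattini_eq_commutator_of_pow_mem {G : Type*} [Group G] [Group.IsNilpotent G] {p : ℕ}
    (hp : p.Prime) (hG : ∀ g : G, g ^ p ∈ commutator G) : frattini G = commutator G :=
  le_antisymm (frattini_le_commutator_of_pow_mem hp hG)
    (le_iInf₂ fun _ hM => commutator_le_of_isCoatom hM)

end Frattini

section PowerMaps

variable {G : Type*} [Group G]

theorem pow_ordCompl_exponent_pow_eq_one (s : ℕ) (g : G) :
    (g ^ ordCompl[s] (Monoid.exponent G)) ^ s ^ (Monoid.exponent G).factorization s = 1 := by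
  rw [← pow_mul, mul_comm, Nat.ordProj_mul_ordCompl_eq_self]
  exact Monoid.pow_exponent_eq_one g

variable [Finite G]

theorem not_surjective_pow_of_prime_dvd_card {p : ℕ} (hp : p.Prime) (hpG : p ∣ Nat.card G) :
    ¬ Function.Surjective fun g : G => g ^ p := by
  have := Fact.mk hp
  obtain ⟨x, hx⟩ := exists_prime_orderOf_dvd_card' p hpG
  intro hsurj
  have hx1 : x = 1 := Finite.injective_iff_surjective.mpr hsurj
    (show x ^ p = 1 ^ p by rw [one_pow, ← hx, pow_orderOf_eq_one])
  exact hp.one_lt.ne' (hx ▸ hx1 ▸ orderOf_one)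

theorem mem_range_pow_ordCompl_exponent {s : ℕ} (hs : s.Prime) {x : G} (hx : orderOf x = s) :
    x ∈ Set.range fun g : G => g ^ ordCompl[s] (Monoid.exponent G) := by
  have hcop : (ordCompl[s] (Monoid.exponent G)).Coprime (orderOf x) := by
    rw [hx]
    exact (Nat.coprime_ordCompl hs Monoid.exponent_ne_zero_of_finite).symm
  obtain ⟨m, hm⟩ := exists_pow_eq_self_of_coprime hcop
  exact ⟨x ^ m, by dsimp only; rw [← pow_mul, mul_comm, pow_mul, hm]⟩

theorem eq_of_range_pow_ordCompl_exponent_subset {q r : ℕ} (hq : q.Prime) (hr : r.Prime)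
    (hqG : q ∣ Nat.card G)
    (h : (Set.range fun g : G => g ^ ordCompl[q] (Monoid.exponent G)) ⊆
      Set.range fun g : G => g ^ ordCompl[r] (Monoid.exponent G)) : q = r := by
  have := Fact.mk hq
  obtain ⟨x, hx⟩ := exists_prime_orderOf_dvd_card' q hqG
  obtain ⟨g, rfl⟩ := h (mem_range_pow_ordCompl_exponent hq hx)
  have hdvd := orderOf_dvd_of_pow_eq_one (pow_ordCompl_exponent_pow_eq_one r g)
  exact (Nat.prime_dvd_prime_iff_eq hq hr).mp (hq.dvd_of_dvd_pow (hx ▸ hdvd))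

variable (hpow : ∀ n : ℕ, IsOneOrCenterOrUniv (Set.range fun g : G => g ^ n))
include hpow

theorem eq_of_prime_dvd_card_of_isOneOrCenterOrUniv {q r : ℕ} (hq : q.Prime) (hr : r.Prime)
    (hqG : q ∣ Nat.card G) (hrG : r ∣ Nat.card G) : q = r := by
  have hne_one {s : ℕ} (hs : s.Prime) (hsG : s ∣ Nat.card G) :
      (Set.range fun g : G => g ^ ordCompl[s] (Monoid.exponent G)) ≠ {1} := by
    have := Fact.mk hs
    obtain ⟨x, hx⟩ := exists_prime_orderOf_dvd_card' s hsG
    intro h1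
    have hx1 : x ∈ ({1} : Set G) := h1 ▸ mem_range_pow_ordCompl_exponent hs hx
    exact hs.one_lt.ne' (by rw [← hx, Set.mem_singleton_iff.mp hx1, orderOf_one])
  rcases (hpow (ordCompl[q] _)).resolve_left (hne_one hq hqG) with hZq | hUq <;>
    rcases (hpow (ordCompl[r] _)).resolve_left (hne_one hr hrG) with hZr | hUr
  · exact eq_of_range_pow_ordCompl_exponent_subset hq hr hqG (hZq.trans hZr.symm).le
  · exact eq_of_range_pow_ordCompl_exponent_subset hq hr hqG (hUr ▸ Set.subset_univ _)
  · exact (eq_of_range_pow_ordCompl_exponent_subset hr hq hrG (hUq ▸ Set.subset_univ _)).symm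
  · exact eq_of_range_pow_ordCompl_exponent_subset hq hr hqG (hUr ▸ Set.subset_univ _)

theorem exists_prime_isPGroup_of_isOneOrCenterOrUniv [Nontrivial G] :
    ∃ p : ℕ, p.Prime ∧ IsPGroup p G := by
  have hp := Nat.minFac_prime (Finite.one_lt_card (α := G)).ne'
  refine ⟨_, hp, (isPGroup_iff_primeFactors_card_subset hp.ne_zero).mpr fun q hq => ?_⟩
  rw [hp.primeFactors, Finset.mem_singleton]
  exact eq_of_prime_dvd_card_of_isOneOrCenterOrUniv hpow (Nat.prime_of_mem_primeFactors hq)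
    hp (Nat.dvd_of_mem_primeFactors hq) (Nat.minFac_dvd _)

variable [Nontrivial G] {p : ℕ} (hp : p.Prime) (hG : IsPGroup p G)
include hp hG

theorem pow_mem_center_of_isOneOrCenterOrUniv (g : G) : g ^ p ∈ Subgroup.center G := by
  have := Fact.mk hp
  have hpG : p ∣ Nat.card G := (hG.card_eq_or_dvd).resolve_left Finite.one_lt_card.ne'
  rcases hpow p with h1 | hZ | hU
  · have : g ^ p ∈ ({1} : Set G) := h1 ▸ Set.mem_range_self g
    exact this ▸ (Subgroup.center G).one_mem
  · rw [← SetLike.mem_coe, ← hZ]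
    exact Set.mem_range_self g
  · exact absurd (Set.range_eq_univ.mp hU) (not_surjective_pow_of_prime_dvd_card hp hpG)

theorem pow_eq_one_of_mem_center_of_isOneOrCenterOrUniv
    (hZ : (Subgroup.center G : Set G) ≠ Set.univ) {z : G} (hz : z ∈ Subgroup.center G) :
    z ^ p = 1 := by
  have := Fact.mk hp
  have hpowZ := pow_mem_center_of_isOneOrCenterOrUniv hpow hp hG
  have hpZ : p ∣ Nat.card (Subgroup.center G) :=
    ((hG.to_subgroup _).card_eq_or_dvd).resolve_left
      (@Finite.one_lt_card _ _ hG.center_nontrivial).ne'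
  rcases hpow p with h1 | hZp | hU
  · exact h1.subset ⟨z, rfl⟩
  · -- the `p²`-th powers are the `p`-th powers of central elements, a proper subset of `Z(G)`
    obtain ⟨g, rfl⟩ : z ∈ Set.range fun g : G => g ^ p := hZp ▸ hz
    rw [← pow_mul]
    rcases hpow (p * p) with h1 | hZpp | hUpp
    · exact h1.subset ⟨g, rfl⟩
    · refine absurd (fun y => ?_) (not_surjective_pow_of_prime_dvd_card hp hpZ)
      obtain ⟨x, hx⟩ : (y : G) ∈ Set.range fun g : G => g ^ (p * p) := hZpp ▸ y.2
      exact ⟨⟨x ^ p, hpowZ x⟩, Subtype.ext (by simpa [← pow_mul] using hx)⟩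
    · refine absurd (Set.eq_univ_of_univ_subset fun y _ => ?_) hZ
      obtain ⟨x, rfl⟩ : y ∈ Set.range fun g : G => g ^ (p * p) := hUpp ▸ Set.mem_univ y
      show x ^ (p * p) ∈ Subgroup.center G
      exact pow_mul x p p ▸ Subgroup.pow_mem _ (hpowZ x) p
  · exact absurd (Set.eq_univ_of_univ_subset (hU ▸ Set.range_subset_iff.mpr hpowZ)) hZ

theorem exponent_center_eq_of_isOneOrCenterOrUniv
    (hZ : (Subgroup.center G : Set G) ≠ Set.univ) : Monoid.exponent (Subgroup.center G) = p := by
  have := Fact.mk hp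
  have := hG.center_nontrivial
  refine (Monoid.exponent_eq_prime_iff hp).mpr fun z hz => orderOf_eq_prime ?_ hz
  exact Subtype.ext (pow_eq_one_of_mem_center_of_isOneOrCenterOrUniv hpow hp hG hZ z.2)

end PowerMaps

theorem center_eq_commutator_of_isOneOrCenterOrUniv {G : Type*} [Group G] [Finite G]
    [Nontrivial G] [Group.IsNilpotent G] (hna : ¬ ∀ a b : G, a * b = b * a)
    (hC : IsOneOrCenterOrUniv (commutatorSet G)) : Subgroup.center G = commutator G := by
  have hne_one : commutatorSet G ≠ {1} := fun h => hna fun a b => by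
    have hab : ⁅a, b⁆ ∈ commutatorSet G := ⟨a, b, rfl⟩
    rw [h] at hab
    exact commutatorElement_eq_one_iff_mul_comm.mp hab
  have hne_univ : commutatorSet G ≠ Set.univ := fun h => commutator_ne_top_of_isNilpotent
    (by rw [commutator_eq_closure, h, Subgroup.closure_univ])
  have hCZ := (hC.resolve_left hne_one).resolve_right hne_univ
  rw [commutator_eq_closure, hCZ, Subgroup.closure_eq]

/-- A nonabelian finite group whose only word images are {1}, Z(G) and G
is a special p-group. -/
theorem special_through_word_images (G : Type*) [Group G] [Finite G]
    (hna : ¬ ∀ a b : G, a * b = b * a)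
    (hw : ∀ (d : ℕ), 1 ≤ d → ∀ w : FreeGroup (Fin d),
      wordImage G w = {(1 : G)} ∨
      wordImage G w = (Subgroup.center G : Set G) ∨
      wordImage G w = (Set.univ : Set G)) :
    ∃ p : ℕ, p.Prime ∧ IsSpecial p G := by
  have hZ : (Subgroup.center G : Set G) ≠ Set.univ := fun h => hna fun a b =>
    Subgroup.mem_center_iff.mp (show b ∈ (Subgroup.center G : Set G) from h ▸ Set.mem_univ b) a
  have : Nontrivial G := by
    by_contra h
    exact hna fun a b => (not_nontrivial_iff_subsingleton.mp h).elim _ _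
  have hpow (n : ℕ) : IsOneOrCenterOrUniv (Set.range fun g : G => g ^ n) :=
    wordImage_of_pow G n ▸ hw 1 le_rfl _
  obtain ⟨p, hp, hG⟩ := exists_prime_isPGroup_of_isOneOrCenterOrUniv hpow
  have := Fact.mk hp
  have := hG.isNilpotent
  have hZC := center_eq_commutator_of_isOneOrCenterOrUniv hna
    (wordImage_commutatorElement G ▸ hw 2 one_le_two _)
  have hΦ := frattini_eq_commutator_of_pow_mem hp
    (hZC ▸ pow_mem_center_of_isOneOrCenterOrUniv hpow hp hG)
  exact ⟨p, hp, hG, hZC, hZC ▸ hΦ.symm,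
    exponent_center_eq_of_isOneOrCenterOrUniv hpow hp hG hZ⟩
end
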